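/- arXiv:1801.01096 — 10 statements merged into one kernel-verified Lean document; each statement's English description precedes it below -/
import Mathlib

section
/- If p and q are periods of a word X of length |X| ≥ p + q − gcd(p,q), then gcd(p,q) is also a period of X. -/
/-- Chain a period `g` along multiples. -/
lemma fw_chain {α : Type*} (X : ℕ → α) (m g : ℕ)
    (A : ∀ i, i + g < m → X i = X (i + g)) :
    ∀ k j, j + k * g < m → X j = X (j + k * g) := by
  intro k
  induction k with
  | zero => intro j _; simp
  | succ k ih =>
    intro j h
    have hk : (k + 1) * g = k * g + g := by ring
    rw [hk] at h ⊢
    have h1 : j + k * g < m := by omega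
    calc X j = X (j + k * g) := ih j h1
    _ = X (j + k * g + g) := A _ (by omega)
    _ = X (j + (k * g + g)) := by ring_nf

/-- Auxiliary version of Fine–Wilf with a fuel parameter and ordering. -/
lemma fw_aux : ∀ (m : ℕ) {α : Type*} (X : ℕ → α) (n p q : ℕ), p + q ≤ m → 0 < p → 0 < q →
    q ≤ p → p + q - Nat.gcd p q ≤ n →
    (∀ i, i + p < n → X i = X (i + p)) →
    (∀ i, i + q < n → X i = X (i + q)) →
    ∀ i, i + Nat.gcd p q < n → X i = X (i + Nat.gcd p q) := by
  intro m
  induction m with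
  | zero => intro α X n p q hm hp hq _ _ _ _; omega
  | succ m ih =>
    intro α X n p q hm hp hq hqp hn hperp hperq
    by_cases hdvd : q ∣ p
    · have hg : Nat.gcd p q = q := by rw [Nat.gcd_comm]; exact Nat.gcd_eq_left hdvd
      intro i hi
      rw [hg] at hi ⊢
      exact hperq i hi
    · have hqlt : q < p := lt_of_le_of_ne hqp (fun h => hdvd (h ▸ dvd_refl q))
      set g := Nat.gcd p q with hgdef
      have hgp : g ∣ p := Nat.gcd_dvd_left _ _
      have hgq : g ∣ q := Nat.gcd_dvd_right _ _
      have hg0 : 0 < g := Nat.gcd_pos_of_pos_left _ hp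
      have hgq_le : g ≤ q := Nat.le_of_dvd hq hgq
      have hglt : g < q := lt_of_le_of_ne hgq_le (fun h => hdvd (h ▸ hgp))
      have hdvd_sub : g ∣ p - q := Nat.dvd_sub hgp hgq
      have hpq : q + g ≤ p := by
        have : g ≤ p - q := Nat.le_of_dvd (by omega) hdvd_sub
        omega
      set p' := p - q with hp'def
      have hp'0 : 0 < p' := by omega
      have hg' : Nat.gcd p' q = g := Nat.gcd_sub_self_left (le_of_lt hqlt)
      have hfuel : p' + q ≤ m := by omega
      have hlen : p' + q - Nat.gcd p' q ≤ n - q := by rw [hg']; omega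
      -- g is a period of the prefix of length n - q
      have A : ∀ i, i + g < n - q → X i = X (i + g) := by
        have P' : ∀ i, i + p' < n - q → X i = X (i + p') := by
          intro i h
          have h1 : i + p < n := by omega
          have h2 : i + p' + q = i + p := by omega
          calc X i = X (i + p) := hperp i h1
          _ = X (i + p') := by rw [← h2]; exact (hperq (i + p') (by omega)).symm
        have Q' : ∀ i, i + q < n - q → X i = X (i + q) := fun i h => hperq i (by omega)
        by_cases hc : q ≤ p'
        · have := ih X (n - q) p' q hfuel hp'0 hq hc hlen P' Q'
          rwa [hg'] at this
        · have hlen2 : q + p' - Nat.gcd q p' ≤ n - q := by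
            rw [Nat.gcd_comm, hg']; omega
          have := ih X (n - q) q p' (by omega) hq hp'0 (by omega) hlen2 Q' P'
          rwa [Nat.gcd_comm, hg'] at this
      -- g is a period of the suffix starting at q
      have B : ∀ i, q ≤ i → i + g < n → X i = X (i + g) := by
        set Y : ℕ → α := fun j => X (j + q) with hY
        have P' : ∀ j, j + p' < n - q → Y j = Y (j + p') := by
          intro j h
          have h1 : j + p < n := by omega
          have h2 : j + q < n := by omega
          show X (j + q) = X (j + p' + q)
          have h3 : j + p' + q = j + p := by omega
          rw [h3]
          calc X (j + q) = X j := (hperq j h2).symm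
          _ = X (j + p) := hperp j h1
        have Q' : ∀ j, j + q < n - q → Y j = Y (j + q) := by
          intro j h
          show X (j + q) = X (j + q + q)
          exact hperq (j + q) (by omega)
        have BY : ∀ j, j + g < n - q → Y j = Y (j + g) := by
          by_cases hc : q ≤ p'
          · have := ih Y (n - q) p' q hfuel hp'0 hq hc hlen P' Q'
            rwa [hg'] at this
          · have hlen2 : q + p' - Nat.gcd q p' ≤ n - q := by
              rw [Nat.gcd_comm, hg']; omega
            have := ih Y (n - q) q p' (by omega) hq hp'0 (by omega) hlen2 Q' P'
            rwa [Nat.gcd_comm, hg'] at this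
        intro i hqi hi
        have := BY (i - q) (by omega)
        have e1 : i - q + q = i := by omega
        have e2 : i - q + g + q = i + g := by omega
        simpa [hY, e1, e2] using this
      have C := fw_chain X (n - q) g A
      intro i hi
      by_cases h1 : i + g < n - q
      · exact A i h1
      · by_cases h2 : q ≤ i
        · exact B i h2 hi
        · -- corner case: i < q, n - q ≤ i + g
          push_neg at h1 h2
          have hn2q : 2 * q ≤ n := by omega
          have hiq : q ≤ i + g := by omega
          obtain ⟨s, hs⟩ := hgq
          have hs2 : 2 ≤ s := by
            rcases Nat.lt_or_ge s 2 with h | h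
            · interval_cases s <;> omega
            · exact h
          set j := i + g - q with hj
          have hjk : j + (s - 1) * g = i := by
            have : (s - 1) * g = s * g - g := by
              rw [Nat.sub_mul, one_mul]
            have hsg : s * g = q := by rw [mul_comm]; omega
            omega
          have hstep1 : X (i + g) = X j := by
            have := hperq j (by omega)
            have e : j + q = i + g := by omega
            rw [e] at this
            exact this.symm
          have hstep2 : X j = X i := by
            have := C (s - 1) j (by omega)
            rwa [hjk] at this
          rw [hstep1, hstep2]

/-- **Fine and Wilf's Periodicity Lemma.**
If `p` and `q` are periods of a word `X` of length `n ≥ p + q - gcd(p,q)`,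
then `gcd(p,q)` is also a period of `X`. -/
theorem fine_wilf {α : Type*} (X : ℕ → α) (n p q : ℕ) (hp : 0 < p) (hq : 0 < q)
    (hn : p + q - Nat.gcd p q ≤ n)
    (hperp : ∀ i, i + p < n → X i = X (i + p))
    (hperq : ∀ i, i + q < n → X i = X (i + q)) :
    ∀ i, i + Nat.gcd p q < n → X i = X (i + Nat.gcd p q) := by
  by_cases h : q ≤ p
  · exact fw_aux (p + q) X n p q le_rfl hp hq h hn hperp hperq
  · have := fw_aux (q + p) X n q p le_rfl hq hp (by omega)
      (by rw [Nat.gcd_comm]; omega) hperq hperp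
    rwa [Nat.gcd_comm] at this
end

section
/- For relatively prime integers 1 < p < q, the partial word W_{p,q} = (S[0..p−3]◊◊)^k · S · (◊◊S[q..q+p−3])^k, where k = ⌊q/p⌋ and S = S_{p,q} is a word of length p+q−2 with periods p and q but not period 1, has both strong periods p and q. -/
/-- A symbol of a partial word (`none` is a hole `◊`) is compatible with a solid letter. -/
def PWCompatible {α : Type*} (x : Option α) (a : α) : Prop :=
  x = none ∨ x = some a

/-- `p` is a strong period of the partial word `X` (a list over `Option α`):
there is a solid word `P` of length `p` with `X[i] ≈ P[i mod p]` for all `i`. -/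
def IsStrongPeriod {α : Type*} (X : List (Option α)) (p : ℕ) : Prop :=
  0 < p ∧ ∃ P : ℕ → α, ∀ (i : ℕ) (h : i < X.length), PWCompatible (X.get ⟨i, h⟩) (P (i % p))

/-- `p` is a period of a solid word `S`. -/
def IsPeriod {α : Type*} (S : List α) (p : ℕ) : Prop :=
  ∀ (i : ℕ) (h1 : i < S.length) (h2 : i + p < S.length), S.get ⟨i, h1⟩ = S.get ⟨i + p, h2⟩

/-- The partial word `W_{p,q} = (S[0..p-3]◊◊)^k ⬝ S ⬝ (◊◊S[q..q+p-3])^k` where `k = ⌊q/p⌋`. -/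
def Wword {α : Type*} (S : List α) (p q : ℕ) : List (Option α) :=
  (List.replicate (q / p) ((S.take (p - 2)).map some ++ [none, none])).flatten ++
    S.map some ++
    (List.replicate (q / p) ([(none : Option α), none] ++ (S.drop q).map some)).flatten

/-!
Put `m = ⌊q/p⌋ p` and read position `i` of `W_{p,q}` as the integer `i - m`, so that `S`
occupies `[0, |S|)`. Every solid letter of `W_{p,q}` then agrees with the `p`-periodic extension
of `S` to `ℤ`: each block copies `p - 2` letters of `S` into their own residue classes mod `p`.
It also agrees with the `q`-periodic extension. Outside `S` a solid letter sits at some `z` with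
`z + q` (left of `S`) or `z - q` (right of `S`) in `[0, |S|)`, and the residue mod `p` of `z`,
resp. `z - q`, is below `p - 2`, because the holes fill the residues `p - 2` and `p - 1`. At such
residues the `p`-extension is invariant under a shift by `q`: `S[x mod p] = S[x mod p + q]` by
the period `q`, and `x mod p + q < p + q - 2 = |S|`.
-/
section Words

variable {α : Type*}

theorem IsPeriod.getElem_add {S : List α} {p : ℕ} (h : IsPeriod S p) {t : ℕ}
    (ht : t + p < S.length) : S[t + p] = S[t] :=
  (h t (by omega) ht).symm

theorem IsPeriod.getElem_mod {S : List α} {p : ℕ} (h : IsPeriod S p) {t : ℕ}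
    (ht : t < S.length) : S[t % p]'((Nat.mod_le t p).trans_lt ht) = S[t] := by
  induction t using Nat.strong_induction_on with
  | _ t ih =>
    obtain rfl | hp := p.eq_zero_or_pos
    · simp only [Nat.mod_zero]
    rcases lt_or_ge t p with htp | htp
    · simp only [Nat.mod_eq_of_lt htp]
    · have hprev := h.getElem_add (t := t - p) (by omega)
      simp only [Nat.sub_add_cancel htp] at hprev
      simp only [Nat.mod_eq_sub_mod htp, ih (t - p) (by omega) (by omega), hprev]

/-- The `p`-periodic extension `z ↦ S[z mod p]` of `S` to `ℤ`; the default `d` is read only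
when `p > S.length`. -/
def periodicExt (S : List α) (d : α) (p : ℕ) (z : ℤ) : α :=
  S.getD (z % p).toNat d

variable (S : List α) (d : α)

theorem periodicExt_congr {p : ℕ} {z z' : ℤ} (h : z ≡ z' [ZMOD p]) :
    periodicExt S d p z = periodicExt S d p z' := by
  rw [periodicExt, periodicExt, h.eq]

theorem periodicExt_periodic (p : ℕ) : Function.Periodic (periodicExt S d p) p :=
  fun _ ↦ periodicExt_congr S d Int.add_modEq_right

variable {S}

theorem IsPeriod.periodicExt_of_modEq {p : ℕ} (h : IsPeriod S p) {z : ℤ} {t : ℕ}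
    (hz : z ≡ t [ZMOD p]) (ht : t < S.length) : periodicExt S d p z = S[t] := by
  rw [periodicExt_congr S d hz, periodicExt, ← Int.natCast_mod, Int.toNat_natCast,
    List.getD_eq_getElem _ _ ((Nat.mod_le t p).trans_lt ht), h.getElem_mod]

end Words

section FineWilf

variable {α : Type*} {S : List α} (d : α) {p q : ℕ}

theorem periodicExt_eq_of_lt (hSp : IsPeriod S p) (hSq : IsPeriod S q) {t : ℕ}
    (ht : t < S.length) : periodicExt S d q t = periodicExt S d p t := by
  rw [hSp.periodicExt_of_modEq d rfl ht, hSq.periodicExt_of_modEq d rfl ht]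

theorem periodicExt_add_of_modEq (hSp : IsPeriod S p) (hSq : IsPeriod S q)
    (hlen : p + q - 2 ≤ S.length) {i : ℕ} (hi : i + 2 < p) {z : ℤ} (hz : z ≡ i [ZMOD p]) :
    periodicExt S d p (z + q) = periodicExt S d p z := by
  have hzq : z + q ≡ (i + q : ℕ) [ZMOD p] := by push_cast; exact hz.add_right q
  rw [hSp.periodicExt_of_modEq d hzq (by omega), hSq.getElem_add,
    hSp.periodicExt_of_modEq d hz (by omega)]

theorem periodicExt_eq_of_add_modEq (hSp : IsPeriod S p) (hSq : IsPeriod S q)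
    (hlen : p + q - 2 ≤ S.length) {i : ℕ} (hi : i + 2 < p) {z : ℤ} (hz : z ≡ i [ZMOD p])
    (h0 : 0 ≤ z + q) (h1 : z + q < S.length) :
    periodicExt S d q z = periodicExt S d p z := by
  obtain ⟨t, ht⟩ := Int.eq_ofNat_of_zero_le h0
  rw [← (periodicExt_periodic S d q) z, ← periodicExt_add_of_modEq d hSp hSq hlen hi hz, ht,
    periodicExt_eq_of_lt d hSp hSq (by omega)]

theorem periodicExt_eq_of_sub_modEq (hSp : IsPeriod S p) (hSq : IsPeriod S q)
    (hlen : p + q - 2 ≤ S.length) {i : ℕ} (hi : i + 2 < p) {z : ℤ} (hz : z - q ≡ i [ZMOD p])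
    (h0 : 0 ≤ z - q) (h1 : z - q < S.length) :
    periodicExt S d q z = periodicExt S d p z := by
  obtain ⟨t, ht⟩ := Int.eq_ofNat_of_zero_le h0
  rw [← (periodicExt_periodic S d q).sub_eq, ht, periodicExt_eq_of_lt d hSp hSq (by omega),
    ← ht, ← periodicExt_add_of_modEq d hSp hSq hlen hi hz, sub_add_cancel]

end FineWilf

section Compatible

variable {α : Type*}

def PWCompatibleWith (X : List (Option α)) (f : ℕ → α) : Prop :=
  ∀ (i : ℕ) (h : i < X.length), PWCompatible X[i] (f i)

theorem PWCompatibleWith.isStrongPeriod {X : List (Option α)} {f : ℕ → α} {p : ℕ}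
    (hX : PWCompatibleWith X f) (hp : 0 < p) (hf : Function.Periodic f p) :
    IsStrongPeriod X p :=
  ⟨hp, f, fun i h ↦ by simpa only [List.get_eq_getElem, hf.map_mod_nat] using hX i h⟩

theorem PWCompatibleWith.append {X Y : List (Option α)} {f : ℕ → α}
    (hX : PWCompatibleWith X f) (hY : PWCompatibleWith Y (fun i ↦ f (X.length + i))) :
    PWCompatibleWith (X ++ Y) f := by
  intro i h
  rcases lt_or_ge i X.length with hi | hi
  · rw [List.getElem_append_left hi]
    exact hX i hi
  · rw [List.getElem_append_right hi]
    simpa only [Nat.add_sub_cancel' hi] using hY (i - X.length) (by simp at h; omega)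

theorem pwCompatibleWith_replicate_none (n : ℕ) (f : ℕ → α) :
    PWCompatibleWith (List.replicate n none) f :=
  fun _ _ ↦ Or.inl (List.getElem_replicate _)

theorem pwCompatibleWith_map_some {S : List α} {f : ℕ → α}
    (h : ∀ (i : ℕ) (hi : i < S.length), S[i] = f i) : PWCompatibleWith (S.map some) f :=
  fun i hi ↦ Or.inr (by simp [h])

theorem pwCompatibleWith_flatten_replicate {L : List (Option α)} {f : ℕ → α} {k : ℕ}
    (h : ∀ j < k, PWCompatibleWith L (fun i ↦ f (j * L.length + i))) :
    PWCompatibleWith (List.replicate k L).flatten f := by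
  induction k with
  | zero => simp [PWCompatibleWith]
  | succ k ih =>
    rw [List.replicate_succ', List.flatten_append, List.flatten_singleton]
    refine (ih fun j hj ↦ h j (by omega)).append ?_
    simpa using h k (by omega)

end Compatible

section Wword

variable {α : Type*} {S : List α} {p q : ℕ}

theorem pwCompatibleWith_Wword (hp : 2 ≤ p) (hlen : S.length = p + q - 2) (E : ℤ → α)
    (hA : ∀ j < q / p, ∀ i (hi : i < p - 2), E ((j * p + i : ℕ) - (q / p * p : ℕ)) = S[i])
    (hS : ∀ t (ht : t < S.length), E t = S[t])
    (hB : ∀ j < q / p, ∀ i (hi : i < p - 2), E (S.length + j * p + 2 + i : ℕ) = S[q + i]) :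
    PWCompatibleWith (Wword S p q) (fun i ↦ E (i - (q / p * p : ℕ))) := by
  have hAlen : ((S.take (p - 2)).map some ++ [none, none]).length = p := by simp; omega
  have hBlen : ([none, none] ++ (S.drop q).map some).length = p := by simp; omega
  have hAklen : (List.replicate (q / p) ((S.take (p - 2)).map some ++ [none, none])).flatten.length
      = q / p * p := by
    simp only [List.length_flatten, List.map_replicate, List.sum_replicate, smul_eq_mul, hAlen]
  refine ((pwCompatibleWith_flatten_replicate fun j hj ↦ ?_).append ?_).append
    (pwCompatibleWith_flatten_replicate fun j hj ↦ ?_)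
  · rw [hAlen]
    refine (pwCompatibleWith_map_some fun i hi ↦ ?_).append (pwCompatibleWith_replicate_none 2 _)
    rw [List.length_take] at hi
    rw [List.getElem_take, hA j hj i (by omega)]
  · refine pwCompatibleWith_map_some fun t ht ↦ ?_
    rw [hAklen, Nat.cast_add, add_sub_cancel_left, hS t ht]
  · rw [hBlen, List.length_append, hAklen, List.length_map]
    refine (pwCompatibleWith_replicate_none 2 _).append (pwCompatibleWith_map_some fun i hi ↦ ?_)
    rw [List.length_drop] at hi
    rw [List.getElem_drop, ← hB j hj i (by omega)]
    congr 1
    push_cast [List.length_cons, List.length_nil]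
    ring

variable (d : α)

theorem pwCompatibleWith_Wword_periodicExt_left (hp : 2 ≤ p) (hlen : S.length = p + q - 2)
    (hSp : IsPeriod S p) :
    PWCompatibleWith (Wword S p q) (fun i ↦ periodicExt S d p (i - (q / p * p : ℕ))) := by
  refine pwCompatibleWith_Wword hp hlen _ (fun j hj i hi ↦ ?_)
    (fun t ht ↦ hSp.periodicExt_of_modEq d rfl ht) (fun j hj i hi ↦ ?_)
  · refine hSp.periodicExt_of_modEq d (Int.modEq_iff_dvd.2 ⟨q / p - j, ?_⟩) (by omega)
    push_cast
    ring
  · refine hSp.periodicExt_of_modEq d (Int.modEq_iff_dvd.2 ⟨-(j + 1), ?_⟩) (by omega)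
    have hlen' : (S.length : ℤ) + 2 = p + q := by omega
    push_cast
    linear_combination -hlen'

theorem pwCompatibleWith_Wword_periodicExt_right (hp : 2 ≤ p) (hlen : S.length = p + q - 2)
    (hSp : IsPeriod S p) (hSq : IsPeriod S q) :
    PWCompatibleWith (Wword S p q) (fun i ↦ periodicExt S d q (i - (q / p * p : ℕ))) := by
  have hm : q / p * p ≤ q := Nat.div_mul_le_self q p
  refine pwCompatibleWith_Wword hp hlen _ (fun j hj i hi ↦ ?_)
    (fun t ht ↦ hSq.periodicExt_of_modEq d rfl ht) (fun j hj i hi ↦ ?_)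
  · have hjp : j * p + p ≤ q / p * p := by nlinarith
    have hz : ((j * p + i : ℕ) : ℤ) - (q / p * p : ℕ) ≡ i [ZMOD p] :=
      Int.modEq_iff_dvd.2 ⟨q / p - j, by push_cast; ring⟩
    rw [periodicExt_eq_of_add_modEq d hSp hSq hlen.ge (by omega) hz (by omega) (by omega),
      hSp.periodicExt_of_modEq d hz (by omega)]
  · have hjp : j * p + p ≤ q / p * p := by nlinarith
    have hlen' : (S.length : ℤ) + 2 = p + q := by omega
    have hz : ((S.length + j * p + 2 + i : ℕ) : ℤ) - q ≡ i [ZMOD p] :=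
      Int.modEq_iff_dvd.2 ⟨-(j + 1), by push_cast; linear_combination -hlen'⟩
    have hz' : ((S.length + j * p + 2 + i : ℕ) : ℤ) ≡ (q + i : ℕ) [ZMOD p] :=
      Int.modEq_iff_dvd.2 ⟨-(j + 1), by push_cast; linear_combination -hlen'⟩
    rw [periodicExt_eq_of_sub_modEq d hSp hSq hlen.ge (by omega) hz (by omega) (by omega),
      hSp.periodicExt_of_modEq d hz' (by omega)]

end Wword

theorem Wword_strongPeriods_general {α : Type*} (p q : ℕ) (S : List α)
    (hp : 1 < p) (hpq : p < q)
    (hlen : S.length = p + q - 2)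
    (hSp : IsPeriod S p) (hSq : IsPeriod S q) :
    IsStrongPeriod (Wword S p q) p ∧ IsStrongPeriod (Wword S p q) q := by
  obtain ⟨d, -⟩ := List.exists_mem_of_length_pos (by omega : 0 < S.length)
  have hshift (r : ℕ) :
      Function.Periodic (fun i : ℕ ↦ periodicExt S d r (i - (q / p * p : ℕ))) r :=
    fun i ↦ by simpa [add_sub_right_comm] using periodicExt_periodic S d r _
  exact ⟨(pwCompatibleWith_Wword_periodicExt_left d hp hlen hSp).isStrongPeriod
      (by omega) (hshift p),
    (pwCompatibleWith_Wword_periodicExt_right d hp hlen hSp hSq).isStrongPeriod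
      (by omega) (hshift q)⟩

/-- For relatively prime `1 < p < q` and a word `S = S_{p,q}` of length `p+q-2` with
periods `p` and `q` but not period `1`, the partial word `W_{p,q}` has
both strong periods `p` and `q`. -/
theorem Wword_strongPeriods {α : Type*} (p q : ℕ) (S : List α)
    (hp : 1 < p) (hpq : p < q) (hcop : Nat.Coprime p q)
    (hlen : S.length = p + q - 2)
    (hSp : IsPeriod S p) (hSq : IsPeriod S q) (hS1 : ¬ IsPeriod S 1) :
    IsStrongPeriod (Wword S p q) p ∧ IsStrongPeriod (Wword S p q) q :=
  Wword_strongPeriods_general p q S hp hpq hlen hSp hSq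
end

section
/- Let H^s(n,p,q) = ⌊(n−q)/p⌋ + ⌊(n−q+1)/p⌋ for coprime 1 < p < q, and let L^s(h,p,q) = min{n : H^s(n,p,q) > h} be its generalized inverse. Then for every integer h ≥ 0, L^s(h,p,q) = ⌈(h+1)/2⌉·p + q − ((h+1) mod 2). -/
/-- `H^s(n,p,q) = ⌊(n−q)/p⌋ + ⌊(n−q+1)/p⌋`. -/
def Hs (n p q : ℕ) : ℕ := (n - q) / p + (n - q + 1) / p

/-- `L^s(h,p,q) = min{n : H^s(n,p,q) > h}`, the generalized inverse of `H^s`. -/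
noncomputable def Ls (h p q : ℕ) : ℕ := sInf {n : ℕ | h < Hs n p q}

/-- For coprime `1 < p < q` and every `h ≥ 0`,
`L^s(h,p,q) = ⌈(h+1)/2⌉·p + q − ((h+1) mod 2)`. -/
theorem Ls_formula (p q h : ℕ) (hp : 1 < p) (hpq : p < q) (hcop : Nat.Coprime p q) :
    Ls h p q = (h + 2) / 2 * p + q - (h + 1) % 2 := by
  have hp0 : 0 < p := by omega
  have key1 : ∀ k : ℕ, ((k+1)*p - 1)/p = k := by
    intro k
    have e : (k+1)*p - 1 = p * k + (p - 1) := by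
      have : (k+1)*p = p*k + p := by ring
      omega
    rw [e, Nat.mul_add_div hp0, Nat.div_eq_of_lt (by omega)]
    omega
  have key2 : ∀ k : ℕ, ((k+1)*p)/p = k + 1 := fun k => Nat.mul_div_cancel _ hp0
  have key3 : ∀ k : ℕ, ((k+1)*p + 1)/p = k + 1 := by
    intro k
    have e : (k+1)*p + 1 = p*(k+1) + 1 := by ring
    rw [e, Nat.mul_add_div hp0, Nat.div_eq_of_lt hp]
  set N := (h + 2) / 2 * p + q - (h + 1) % 2 with hNdef
  clear_value N
  have hkp : ∀ k : ℕ, p ≤ (k+1)*p := by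
    intro k; exact Nat.le_mul_of_pos_left p k.succ_pos
  have hmem : h < Hs N p q := by
    unfold Hs
    rcases Nat.even_or_odd h with ⟨k, hk⟩ | ⟨k, hk⟩
    · -- h = k + k
      have hN : N = (k+1)*p + q - 1 := by
        have e2 : (h+2)/2 = k+1 := by omega
        have e3 : (h+1)%2 = 1 := by omega
        rw [hNdef, e2, e3]
      have hkp1 := hkp k
      have e4 : (k+1)*p + q - 1 - q = (k+1)*p - 1 := by omega
      have e5 : (k+1)*p - 1 + 1 = (k+1)*p := by omega
      rw [hN, e4, e5, key1, key2]
      omega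
    · -- h = 2k+1
      have hN : N = (k+1)*p + q := by
        have e2 : (h+2)/2 = k+1 := by omega
        have e3 : (h+1)%2 = 0 := by omega
        rw [hNdef, e2, e3]
        omega
      have e4 : (k+1)*p + q - q = (k+1)*p := by omega
      rw [hN, e4, key2, key3]
      omega
  have hub : ∀ n ∈ {n : ℕ | h < Hs n p q}, N ≤ n := by
    intro n hn
    simp only [Set.mem_setOf_eq] at hn
    by_contra hlt
    push_neg at hlt
    unfold Hs at hn
    rcases Nat.even_or_odd h with ⟨k, hk⟩ | ⟨k, hk⟩
    · have hN : N = (k+1)*p + q - 1 := by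
        have e2 : (h+2)/2 = k+1 := by omega
        have e3 : (h+1)%2 = 1 := by omega
        rw [hNdef, e2, e3]
      have hkp1 := hkp k
      rw [hN] at hlt
      have hb1 : n - q ≤ (k+1)*p - 1 - 1 := by omega
      have hb2 : n - q + 1 ≤ (k+1)*p - 1 := by omega
      have d1 : (n - q)/p ≤ k := by
        calc (n - q)/p ≤ ((k+1)*p - 1)/p := Nat.div_le_div_right (by omega)
        _ = k := key1 k
      have d2 : (n - q + 1)/p ≤ k := by
        calc (n - q + 1)/p ≤ ((k+1)*p - 1)/p := Nat.div_le_div_right hb2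
        _ = k := key1 k
      omega
    · have hN : N = (k+1)*p + q := by
        have e2 : (h+2)/2 = k+1 := by omega
        have e3 : (h+1)%2 = 0 := by omega
        rw [hNdef, e2, e3]
        omega
      have hkp1 := hkp k
      rw [hN] at hlt
      have d1 : (n - q)/p ≤ k := by
        calc (n - q)/p ≤ ((k+1)*p - 1)/p := Nat.div_le_div_right (by omega)
        _ = k := key1 k
      have d2 : (n - q + 1)/p ≤ k + 1 := by
        calc (n - q + 1)/p ≤ ((k+1)*p)/p := Nat.div_le_div_right (by omega)
        _ = k + 1 := key2 k
      omega
  have hmem' : N ∈ {n : ℕ | h < Hs n p q} := hmem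
  exact le_antisymm (Nat.sInf_le hmem') (le_csInf ⟨N, hmem'⟩ hub)
end

section
/- Let p, q > 1 be relatively prime integers and n ≥ max(p,q). Then H^d(n,p,q) = min over 0 ≤ l ≤ n−1 of (G(l,p,q) + G(n−l−1,p,q)), where G(n,p,q) = ⌊n/p⌋ + ⌊n/q⌋ − 2⌊n/(pq)⌋. -/
/-- A `(p,q)`-special partial word over `Option Bool` (`none` = hole, `some true` = 'b',
`some false` = 'a'): there is a position `l` such that `S[i] = 'b'` if `p ∣ (l-i)` and
`q ∣ (l-i)`, `S[i] = 'a'` if neither divides `l-i`, and `S[i] = ◊` otherwise. -/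
def IsSpecial (S : List (Option Bool)) (p q : ℕ) : Prop :=
  ∃ l < S.length, ∀ (i : ℕ) (h : i < S.length),
    S.get ⟨i, h⟩ =
      if (p : ℤ) ∣ ((l : ℤ) - i) then
        (if (q : ℤ) ∣ ((l : ℤ) - i) then some true else none)
      else
        (if (q : ℤ) ∣ ((l : ℤ) - i) then none else some false)

/-- `G(n,p,q) = ⌊n/p⌋ + ⌊n/q⌋ − 2⌊n/(pq)⌋`. -/
def Gfun (n p q : ℕ) : ℕ := n / p + n / q - 2 * (n / (p * q))

/-!
The letters of a special word are determined by `p`, `q` and the position `l`, and the letter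
at `i` is a hole exactly when one but not both of `p`, `q` divides `|l - i|`. Counting the
holes to the left and to the right of `l` separately, each side of length `m` has as many
holes as there are `1 ≤ j ≤ m` with exactly one of `p ∣ j`, `q ∣ j`, which by
inclusion–exclusion (and `lcm p q = p q`) is `⌊m/p⌋ + ⌊m/q⌋ − 2⌊m/(pq)⌋`.
-/

namespace Nat

theorem count_xor_add_two_mul_count_and (A B : ℕ → Prop) [DecidablePred A] [DecidablePred B]
    (m : ℕ) :
    count (fun k => Xor (A k) (B k)) m + 2 * count (fun k => A k ∧ B k) m =
      count A m + count B m := by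
  induction m with
  | zero => simp
  | succ m ih =>
    simp only [count_succ]
    by_cases hA : A m <;> by_cases hB : B m <;> simp [hA, hB, Xor] at ih ⊢ <;> omega

theorem count_dvd_succ (m d : ℕ) : count (fun k => d ∣ k + 1) m = m / d := by
  rw [count_eq_card_filter_range, card_multiples]

theorem count_natAbs_sub_succ_self {Q : ℕ → Prop} [DecidablePred Q] (hQ : ¬ Q 0) (l : ℕ) :
    count (fun i => Q ((l : ℤ) - i).natAbs) (l + 1) = count (fun k => Q (k + 1)) l := by
  induction l with
  | zero => simp [count_succ, hQ]
  | succ l ih =>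
    rw [count_succ (fun k => Q (k + 1)), ← ih, count_succ']
    push_cast
    simp only [add_sub_add_right_eq_sub, sub_zero]
    rfl

-- The point `l` has distance `0`; the others fall into runs of distances `1, …, l` and `1, …, m`.
theorem count_natAbs_sub {Q : ℕ → Prop} [DecidablePred Q] (hQ : ¬ Q 0) (l m : ℕ) :
    count (fun i => Q ((l : ℤ) - i).natAbs) (l + 1 + m) =
      count (fun k => Q (k + 1)) l + count (fun k => Q (k + 1)) m := by
  have hright : (fun k => Q ((l : ℤ) - (l + 1 + k : ℕ)).natAbs) = fun k => Q (k + 1) := by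
    funext k
    rw [show ((l : ℤ) - (l + 1 + k : ℕ)).natAbs = k + 1 by omega]
  rw [count_add, count_natAbs_sub_succ_self hQ]
  simp only [hright]

end Nat

theorem count_xor_dvd_succ_eq_gfun {p q : ℕ} (hcop : Nat.Coprime p q) (m : ℕ) :
    Nat.count (fun k => Xor (p ∣ k + 1) (q ∣ k + 1)) m = Gfun m p q := by
  have hboth : Nat.count (fun k => p ∣ k + 1 ∧ q ∣ k + 1) m = m / (p * q) := by
    simp only [← Nat.lcm_dvd_iff, hcop.lcm_eq_mul, Nat.count_dvd_succ]
  have := Nat.count_xor_add_two_mul_count_and (p ∣ · + 1) (q ∣ · + 1) m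
  rw [hboth, Nat.count_dvd_succ, Nat.count_dvd_succ] at this
  unfold Gfun
  omega

def specialLetter (p q : ℕ) (d : ℤ) : Option Bool :=
  if (p : ℤ) ∣ d then (if (q : ℤ) ∣ d then some true else none)
  else (if (q : ℤ) ∣ d then none else some false)

def specialWord (p q n l : ℕ) : List (Option Bool) :=
  (List.range n).map fun i : ℕ => specialLetter p q ((l : ℤ) - i)

@[simp]
theorem length_specialWord (p q n l : ℕ) : (specialWord p q n l).length = n := by
  simp [specialWord]

theorem isSpecial_iff {S : List (Option Bool)} {p q : ℕ} :
    IsSpecial S p q ↔ ∃ l < S.length, S = specialWord p q S.length l := by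
  refine exists_congr fun l => and_congr_right fun _ => ⟨fun h => ?_, ?_⟩
  · refine List.ext_get (by simp [specialWord]) fun i hi _ => ?_
    simp only [h i hi, specialWord, specialLetter, List.get_eq_getElem, List.getElem_map,
      List.getElem_range]
  · intro h i hi
    simp only [List.get_eq_getElem, List.getElem_of_eq h, specialWord, specialLetter,
      List.getElem_map, List.getElem_range]

theorem specialLetter_eq_none_iff {p q : ℕ} {d : ℤ} :
    specialLetter p q d = none ↔ Xor (p ∣ d.natAbs) (q ∣ d.natAbs) := by
  simp only [specialLetter, ← Int.natCast_dvd, Xor]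
  split_ifs <;> simp_all

theorem count_none_specialWord {p q n l : ℕ} (hcop : Nat.Coprime p q) (hl : l < n) :
    (specialWord p q n l).count none = Gfun l p q + Gfun (n - l - 1) p q := by
  obtain ⟨m, rfl⟩ : ∃ m, n = l + 1 + m := ⟨n - l - 1, by omega⟩
  have hholes : (specialWord p q (l + 1 + m) l).count none =
      Nat.count (fun i => Xor (p ∣ ((l : ℤ) - i).natAbs) (q ∣ ((l : ℤ) - i).natAbs))
        (l + 1 + m) := by
    simp only [specialWord, List.count, List.countP_map, Nat.count]
    congr 1
    funext i
    rw [Function.comp_apply, Bool.eq_iff_iff, beq_iff_eq, decide_eq_true_iff,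
      specialLetter_eq_none_iff]
  rw [hholes, Nat.count_natAbs_sub (Q := fun j => Xor (p ∣ j) (q ∣ j)) (by simp [Xor]),
    count_xor_dvd_succ_eq_gfun hcop, count_xor_dvd_succ_eq_gfun hcop]
  congr 2
  omega

theorem Hd_formula_general (p q n : ℕ) (hcop : Nat.Coprime p q) :
    sInf {h : ℕ | ∃ S : List (Option Bool),
        IsSpecial S p q ∧ S.length = n ∧ S.count none = h} =
      sInf {v : ℕ | ∃ l < n, v = Gfun l p q + Gfun (n - l - 1) p q} := by
  congr 1
  ext h
  simp only [Set.mem_ofPred_eq, isSpecial_iff]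
  constructor
  · rintro ⟨S, ⟨l, hl, hS⟩, hlen, rfl⟩
    rw [hlen] at hl hS
    exact ⟨l, hl, by rw [hS, count_none_specialWord hcop hl]⟩
  · rintro ⟨l, hl, rfl⟩
    exact ⟨specialWord p q n l, ⟨l, by simpa, by simp⟩, by simp, count_none_specialWord hcop hl⟩

/-- `H^d(n,p,q)`, the minimum number of holes in a `(p,q)`-special partial word
of length `n`, equals `min_{0 ≤ l ≤ n-1} (G(l,p,q) + G(n-l-1,p,q))`. -/
theorem Hd_formula (p q n : ℕ) (hp : 1 < p) (hq : 1 < q) (hcop : Nat.Coprime p q)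
    (hn : max p q ≤ n) :
    sInf {h : ℕ | ∃ S : List (Option Bool),
        IsSpecial S p q ∧ S.length = n ∧ S.count none = h} =
      sInf {v : ℕ | ∃ l < n, v = Gfun l p q + Gfun (n - l - 1) p q} :=
  Hd_formula_general p q n hcop
end

section
/- Let p, q > 1 be relatively prime with p < q, G(n,p,q) = ⌊n/p⌋ + ⌊n/q⌋ − 2⌊n/(pq)⌋, and H^d(n,p,q) = min over 0 ≤ l ≤ n−1 of (G(l,p,q) + G(n−l−1,p,q)). Then for n ≥ q: ⌊n/q⌋ + ⌊n/p⌋ − 2⌈n/(pq)⌉ ≤ H^d(n,p,q) ≤ ⌊n/q⌋ + ⌊(n−q)/p⌋ + ⌊(q−1)/p⌋ − 1. -/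
/-- `H^d(n,p,q) = min_{0 ≤ l ≤ n-1} (G(l,p,q) + G(n-l-1,p,q))`. -/
noncomputable def Hd (n p q : ℕ) : ℕ :=
  sInf {v : ℕ | ∃ l < n, v = Gfun l p q + Gfun (n - l - 1) p q}

lemma Gfun_eq (x p q : ℕ) (hp : 0 < p) (hq : 0 < q) :
    Gfun x p q + 2 * (x / (p * q)) = x / p + x / q := by
  have h1 : x / (p * q) ≤ x / p := Nat.div_le_div_left (Nat.le_mul_of_pos_right p hq) hp
  have h2 : x / (p * q) ≤ x / q := by
    rw [mul_comm]; exact Nat.div_le_div_left (Nat.le_mul_of_pos_right q hp) hq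
  unfold Gfun
  omega

lemma key_div (p a b : ℕ) (hp : 0 < p) : (a + b + 1) / p ≤ a / p + b / p + 1 := by
  have h1 := Nat.div_add_mod a p
  have h2 := Nat.div_add_mod b p
  have hr : a % p < p := Nat.mod_lt _ hp
  have hs : b % p < p := Nat.mod_lt _ hp
  have hsum : a + b + 1 = p * (a / p + b / p) + (a % p + b % p + 1) := by
    rw [Nat.mul_add]; omega
  rw [hsum, Nat.mul_add_div hp]
  have : (a % p + b % p + 1) / p < 2 := (Nat.div_lt_iff_lt_mul hp).mpr (by omega)
  omega

lemma div_add_div_le (a b k : ℕ) : a / k + b / k ≤ (a + b) / k := by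
  rcases Nat.eq_zero_or_pos k with rfl | hk
  · simp
  · rw [Nat.le_div_iff_mul_le hk, Nat.add_mul]
    exact Nat.add_le_add (Nat.div_mul_le_self a k) (Nat.div_mul_le_self b k)

/-- For coprime `1 < p < q` and `n ≥ q`:
`⌊n/q⌋ + ⌊n/p⌋ − 2⌈n/(pq)⌉ ≤ H^d(n,p,q) ≤ ⌊n/q⌋ + ⌊(n−q)/p⌋ + ⌊(q−1)/p⌋ − 1`. -/
theorem Hd_bounds (p q n : ℕ) (hp : 1 < p) (hpq : p < q) (hcop : Nat.Coprime p q)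
    (hn : q ≤ n) :
    ((n / q : ℕ) : ℤ) + (n / p : ℕ) - 2 * ((n + p * q - 1) / (p * q) : ℕ) ≤
        (Hd n p q : ℤ) ∧
      (Hd n p q : ℤ) ≤ ((n / q : ℕ) : ℤ) + ((n - q) / p : ℕ) + ((q - 1) / p : ℕ) - 1 := by
  have hp0 : 0 < p := by omega
  have hq0 : 0 < q := by omega
  have hpq0 : 0 < p * q := Nat.mul_pos hp0 hq0
  have hn0 : 0 < n := by omega
  set S := {v : ℕ | ∃ l < n, v = Gfun l p q + Gfun (n - l - 1) p q} with hS
  have hne : S.Nonempty := ⟨Gfun 0 p q + Gfun (n - 0 - 1) p q, 0, hn0, rfl⟩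
  have hceil : (n + p * q - 1) / (p * q) = (n - 1) / (p * q) + 1 := by
    have : n + p * q - 1 = (n - 1) + p * q := by omega
    rw [this, Nat.add_div_right _ hpq0]
  constructor
  · -- lower bound
    obtain ⟨⟨l, hl, hv⟩, _⟩ : Hd n p q ∈ S ∧ True := ⟨Nat.sInf_mem hne, trivial⟩
    set m := n - l - 1 with hm
    have hlm : l + m + 1 = n := by omega
    have hG1 := Gfun_eq l p q hp0 hq0
    have hG2 := Gfun_eq m p q hp0 hq0
    have hkp : n / p ≤ l / p + m / p + 1 := by rw [← hlm]; exact key_div p l m hp0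
    have hkq : n / q ≤ l / q + m / q + 1 := by rw [← hlm]; exact key_div q l m hq0
    have hpqd : l / (p * q) + m / (p * q) ≤ (n - 1) / (p * q) := by
      have : l + m = n - 1 := by omega
      rw [← this]; exact div_add_div_le l m (p * q)
    have hHd : Hd n p q = Gfun l p q + Gfun m p q := hv
    omega
  · -- upper bound
    have hmem : Gfun (q - 1) p q + Gfun (n - (q - 1) - 1) p q ∈ S :=
      ⟨q - 1, by omega, rfl⟩
    have hle : Hd n p q ≤ Gfun (q - 1) p q + Gfun (n - (q - 1) - 1) p q :=
      Nat.sInf_le hmem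
    have hnq : n - (q - 1) - 1 = n - q := by omega
    rw [hnq] at hle
    have hG1 : Gfun (q - 1) p q = (q - 1) / p := by
      unfold Gfun
      have h1 : (q - 1) / q = 0 := Nat.div_eq_of_lt (by omega)
      have h2 : (q - 1) / (p * q) = 0 := Nat.div_eq_of_lt (lt_of_lt_of_le (by omega) (Nat.le_mul_of_pos_left q hp0))
      rw [h1, h2]
      simp
    have hG2 := Gfun_eq (n - q) p q hp0 hq0
    have hdivq : n / q = (n - q) / q + 1 := by
      have h := Nat.add_div_right (n - q) hq0
      rw [Nat.sub_add_cancel hn] at h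
      exact h
    omega
end

section
/- Let p, q be relatively prime positive integers, G(n,p,q) = ⌊n/p⌋ + ⌊n/q⌋ − 2⌊n/(pq)⌋, G̃ its generalized inverse in n, and L^d(h,p,q) = max over 0 ≤ k ≤ h of (G̃(k,p,q) + G̃(h−k,p,q)). Then for every h ≥ 0: L^d(h,p,q) = L^d(h mod (p+q−2), p, q) + ⌊h/(p+q−2)⌋ · pq. Moreover L^d(p+q−3,p,q) = pq. -/
/-- `G̃(h,p,q) = min{n : G(n,p,q) > h}`, the generalized inverse of `G` in `n`. -/
noncomputable def Gtilde (h p q : ℕ) : ℕ := sInf {n : ℕ | h < Gfun n p q}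

/-- `L^d(h,p,q) = max_{0 ≤ k ≤ h} (G̃(k,p,q) + G̃(h−k,p,q))`. -/
noncomputable def Ld (h p q : ℕ) : ℕ :=
  (Finset.range (h + 1)).sup (fun k => Gtilde k p q + Gtilde (h - k) p q)

lemma monotone_self_sub_div (q : ℕ) : Monotone fun a : ℕ => a - a / q := by
  refine monotone_nat_of_le_succ fun a => ?_
  have := Nat.succ_div (a := a) (b := q)
  split_ifs at this <;> omega

lemma div_add_div_add_one_of_add_add_one_eq_mul {a b d s : ℕ} (hd : 0 < d)
    (h : a + b + 1 = d * s) : a / d + b / d + 1 = s := by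
  have ha := Nat.div_add_mod a d
  have hb := Nat.div_add_mod b d
  have ha' := Nat.mod_lt a hd
  have hb' := Nat.mod_lt b hd
  have hlt : d * (a / d + b / d) < d * s := by rw [mul_add]; omega
  have hgt : d * s < d * (a / d + b / d + 2) := by rw [mul_add, mul_add]; omega
  have := Nat.lt_of_mul_lt_mul_left hlt
  have := Nat.lt_of_mul_lt_mul_left hgt
  omega

section Gfun

variable {p q : ℕ}

@[simp]
lemma Gfun_zero (p q : ℕ) : Gfun 0 p q = 0 := by
  simp [Gfun]

lemma Gfun_eq_sub_add_sub (n p q : ℕ) :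
    Gfun n p q = (n / p - n / p / q) + (n / q - n / q / p) := by
  have h₁ : n / p / q = n / (p * q) := Nat.div_div_eq_div_mul n p q
  have h₂ : n / q / p = n / (p * q) := by rw [Nat.div_div_eq_div_mul, mul_comm]
  have := Nat.div_le_self (n / p) q
  have := Nat.div_le_self (n / q) p
  unfold Gfun
  omega

lemma Gfun_mono (p q : ℕ) : Monotone fun n => Gfun n p q := fun a b hab => by
  simp only [Gfun_eq_sub_add_sub]
  exact add_le_add (monotone_self_sub_div q (Nat.div_le_div_right hab))
    (monotone_self_sub_div p (Nat.div_le_div_right hab))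

lemma Gfun_add_mul_self (hp : 0 < p) (hq : 0 < q) (n : ℕ) :
    Gfun (n + p * q) p q = Gfun n p q + (p + q - 2) := by
  have e₁ : (n + p * q) / p = n / p + q := Nat.add_mul_div_left _ _ hp
  have e₂ : (n + p * q) / q = n / q + p := by rw [mul_comm]; exact Nat.add_mul_div_left _ _ hq
  rw [Gfun_eq_sub_add_sub, Gfun_eq_sub_add_sub, e₁, e₂, Nat.add_div_right _ hq,
    Nat.add_div_right _ hp]
  have := Nat.div_le_self (n / p) q
  have := Nat.div_le_self (n / q) p
  omega

lemma Gfun_mul_mul (hp : 0 < p) (hq : 0 < q) (k : ℕ) :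
    Gfun (k * (p * q)) p q = k * (p + q - 2) := by
  induction k with
  | zero => simp
  | succ k ih => rw [add_one_mul, Gfun_add_mul_self hp hq, ih, add_one_mul]

lemma Gfun_of_lt {n : ℕ} (hn : n < p * q) : Gfun n p q = n / p + n / q := by
  simp [Gfun, Nat.div_eq_of_lt hn]

lemma Gfun_add_Gfun_sub (hp : 0 < p) (hq : 0 < q) {n : ℕ} (hn : n < p * q) :
    Gfun n p q + Gfun (p * q - 1 - n) p q = p + q - 2 := by
  have hsum : n + (p * q - 1 - n) + 1 = p * q := by omega
  have dp := div_add_div_add_one_of_add_add_one_eq_mul hp hsum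
  have dq := div_add_div_add_one_of_add_add_one_eq_mul hq (hsum.trans (mul_comm p q))
  rw [Gfun_of_lt hn, Gfun_of_lt (by omega)]
  omega

lemma Gfun_add_Gfun_le {a b : ℕ} (hab : a + b < p * q) :
    Gfun a p q + Gfun b p q ≤ Gfun (a + b) p q := by
  rw [Gfun_of_lt (by omega), Gfun_of_lt (by omega), Gfun_of_lt hab]
  have := Nat.div_add_div_le_add_div (x := a) (y := b) (z := p)
  have := Nat.div_add_div_le_add_div (x := a) (y := b) (z := q)
  omega

lemma Gfun_add_sub_mul_add_le (hp : 0 < p) (hq : 0 < q) {x y : ℕ} (hx : x < p * q)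
    (hy : y < p * q) (hxy : p * q ≤ x + y) :
    Gfun (x + y - p * q) p q + (p + q - 2) ≤ Gfun x p q + Gfun y p q := by
  have hsym := Gfun_add_Gfun_sub hp hq hy
  have hsuper := Gfun_add_Gfun_le (p := p) (q := q) (a := p * q - 1 - y) (b := x + y - p * q)
    (by omega)
  have hmono := Gfun_mono p q (show p * q - 1 - y + (x + y - p * q) ≤ x by omega)
  simp only at hmono
  omega

end Gfun

section Ld

variable {p q : ℕ} (hp : 1 < p) (hq : 1 < q)
include hp hq

lemma exists_lt_Gfun (k : ℕ) : ∃ n, k < Gfun n p q := by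
  refine ⟨(k + 1) * (p * q), ?_⟩
  rw [Gfun_mul_mul (by omega) (by omega)]
  exact Nat.lt_of_lt_of_le (Nat.lt_succ_self k) (Nat.le_mul_of_pos_right _ (by omega))

lemma lt_Gtilde_iff {n k : ℕ} : n < Gtilde k p q ↔ Gfun n p q ≤ k := by
  constructor
  · intro hn
    by_contra! hk
    exact absurd (Nat.sInf_le (show n ∈ {n | k < Gfun n p q} from hk)) (not_le.2 hn)
  · intro hn
    by_contra! hle
    have hmem : k < Gfun (Gtilde k p q) p q := Nat.sInf_mem (exists_lt_Gfun hp hq k)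
    have := Gfun_mono p q hle
    simp only at this
    omega

lemma Gtilde_pos (k : ℕ) : 0 < Gtilde k p q :=
  (lt_Gtilde_iff hp hq).2 (by simp)

lemma add_add_two_le_Ld {h x y : ℕ} (hxy : Gfun x p q + Gfun y p q ≤ h) :
    x + y + 2 ≤ Ld h p q := by
  have hx : x < Gtilde (Gfun x p q) p q := (lt_Gtilde_iff hp hq).2 le_rfl
  have hy : y < Gtilde (h - Gfun x p q) p q := (lt_Gtilde_iff hp hq).2 (by omega)
  have hsup := Finset.le_sup (f := fun k => Gtilde k p q + Gtilde (h - k) p q)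
    (Finset.mem_range.2 (show Gfun x p q < h + 1 by omega))
  unfold Ld
  omega

lemma exists_add_add_two_eq_Ld (h : ℕ) :
    ∃ x y, Gfun x p q + Gfun y p q ≤ h ∧ x + y + 2 = Ld h p q := by
  obtain ⟨k, hk, hsup⟩ := Finset.exists_mem_eq_sup (Finset.range (h + 1)) ⟨0, by simp⟩
    (fun k => Gtilde k p q + Gtilde (h - k) p q)
  have h₁ := Gtilde_pos hp hq k
  have h₂ := Gtilde_pos hp hq (h - k)
  refine ⟨Gtilde k p q - 1, Gtilde (h - k) p q - 1, ?_, ?_⟩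
  · have := (lt_Gtilde_iff hp hq).1 (Nat.sub_lt h₁ one_pos)
    have := (lt_Gtilde_iff hp hq).1 (Nat.sub_lt h₂ one_pos)
    have := Finset.mem_range.1 hk
    omega
  · rw [Ld, hsup]
    omega

lemma Ld_add (h : ℕ) : Ld (h + (p + q - 2)) p q = Ld h p q + p * q := by
  apply le_antisymm
  · obtain ⟨x, y, hxy, hL⟩ := exists_add_add_two_eq_Ld hp hq (h + (p + q - 2))
    rw [← hL]
    clear hL
    wlog hyx : y ≤ x generalizing x y
    · simpa only [add_comm x y] using this y x (by omega) (by omega)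
    rcases le_or_gt (p * q) x with hx | hx
    · obtain ⟨x, rfl⟩ := Nat.exists_eq_add_of_le' hx
      rw [Gfun_add_mul_self (by omega) (by omega)] at hxy
      have := add_add_two_le_Ld hp hq (x := x) (y := y) (h := h) (by omega)
      omega
    rcases lt_or_ge (x + y) (p * q) with hs | hs
    · have := add_add_two_le_Ld hp hq (x := 0) (y := 0) (h := h) (by simp)
      omega
    · have := Gfun_add_sub_mul_add_le (by omega) (by omega) hx (by omega) hs
      have := add_add_two_le_Ld hp hq (x := x + y - p * q) (y := 0) (h := h) (by simp; omega)
      omega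
  · obtain ⟨x, y, hxy, hL⟩ := exists_add_add_two_eq_Ld hp hq h
    have := add_add_two_le_Ld hp hq (x := x + p * q) (y := y) (h := h + (p + q - 2))
      (by rw [Gfun_add_mul_self (by omega) (by omega)]; omega)
    omega

lemma Ld_add_mul (h j : ℕ) : Ld (h + (p + q - 2) * j) p q = Ld h p q + j * (p * q) := by
  induction j with
  | zero => simp
  | succ j ih => rw [mul_add_one, ← add_assoc, Ld_add hp hq, ih, add_one_mul, add_assoc]

lemma Ld_add_sub_three : Ld (p + q - 3) p q = p * q := by
  have hp₀ : 0 < p := by omega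
  have hq₀ : 0 < q := by omega
  apply le_antisymm
  · obtain ⟨x, y, hxy, hL⟩ := exists_add_add_two_eq_Ld hp hq (p + q - 3)
    rw [← hL]
    have hy : y < p * q := by
      by_contra! hy
      obtain ⟨y, rfl⟩ := Nat.exists_eq_add_of_le' hy
      rw [Gfun_add_mul_self hp₀ hq₀] at hxy
      omega
    by_contra! hlt
    have := Gfun_add_Gfun_sub hp₀ hq₀ hy
    have := Gfun_mono p q (show p * q - 1 - y ≤ x by omega)
    simp only at this
    omega
  · set n := Gtilde 0 p q
    have hn₀ : 0 < n := Gtilde_pos hp hq 0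
    have hGn : 0 < Gfun n p q := Nat.pos_of_ne_zero fun h => lt_irrefl n
      ((lt_Gtilde_iff hp hq).2 h.le)
    have hGn₁ : Gfun (n - 1) p q = 0 :=
      Nat.le_zero.1 ((lt_Gtilde_iff hp hq).1 (Nat.sub_lt hn₀ one_pos))
    have hpq : 0 < p * q := Nat.mul_pos hp₀ hq₀
    have hn : n < p * q := by
      by_contra! hn
      have hsym := Gfun_add_Gfun_sub hp₀ hq₀ hpq
      have := (lt_Gtilde_iff hp hq (k := 0)).1 (show p * q - 1 < n by omega)
      simp only [Gfun_zero, Nat.sub_zero] at hsym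
      omega
    have hsym := Gfun_add_Gfun_sub hp₀ hq₀ hn
    have := add_add_two_le_Ld hp hq (x := p * q - 1 - n) (y := n - 1) (h := p + q - 3) (by omega)
    omega

end Ld

theorem Ld_reduce_general (p q h : ℕ) (hp : 1 < p) (hq : 1 < q) :
    Ld h p q = Ld (h % (p + q - 2)) p q + h / (p + q - 2) * (p * q) ∧
      Ld (p + q - 3) p q = p * q := by
  refine ⟨?_, Ld_add_sub_three hp hq⟩
  conv_lhs => rw [← Nat.mod_add_div h (p + q - 2)]
  exact Ld_add_mul hp hq _ _

/-- For coprime `p, q > 1` and every `h ≥ 0`: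
`L^d(h,p,q) = L^d(h mod (p+q−2),p,q) + ⌊h/(p+q−2)⌋·pq`; moreover `L^d(p+q−3,p,q) = pq`. -/
theorem Ld_reduce (p q h : ℕ) (hp : 1 < p) (hq : 1 < q) (hcop : Nat.Coprime p q) :
    Ld h p q = Ld (h % (p + q - 2)) p q + h / (p + q - 2) * (p * q) ∧
      Ld (p + q - 3) p q = p * q :=
  Ld_reduce_general p q h hp hq
end

section
/- Let 1 < p < q be coprime integers and let 𝐆 be the graph on {0,…,n−1} where i ~ j iff p | (j−i) or q | (j−i). For 0 ≤ j < p, let E_j be the set of edges (i,i+q) with i ≡ j (mod p). Then |E_j| = ⌈(n−j−q)/p⌉, and min over distinct i ≠ j of (|E_i| + |E_j|) = |E_{p−1}| + |E_{p−2}| = ⌊(n−q)/p⌋ + ⌊(n−q+1)/p⌋. -/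
/-- `|E_j|`: the number of `q`-edges `(i, i+q)` of the `(n,p,q)`-graph with `i ≡ j (mod p)`,
i.e. the number of `i < n - q` with `i % p = j`. -/
def Ecard (n p q j : ℕ) : ℕ := ((Finset.range (n - q)).filter (fun i => i % p = j)).card

/-!
The residue class `j` below `m` is `{j, p + j, 2p + j, …}`, so `i ↦ i / p` numbers it by
`0, 1, …, ⌈(m - j) / p⌉ - 1`. The count `|E_j| = ⌈(n - q - j) / p⌉` is antitone in `j`, so a sum
`|E_i| + |E_j|` over distinct `i, j < p` is smallest for the two largest residues `p - 1, p - 2`,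
where the ceiling becomes `⌊(n - q) / p⌋` and `⌊(n - q + 1) / p⌋` respectively.
-/

open Finset

namespace Nat

theorem card_filter_range_mod_eq {p j : ℕ} (m : ℕ) (hj : j < p) :
    #{i ∈ range m | i % p = j} = (m + (p - 1 - j)) / p := by
  have hp : 0 < p := by omega
  rw [← card_range ((m + (p - 1 - j)) / p)]
  refine card_nbij' (· / p) (p * · + j) ?_ ?_ ?_ ?_
  · intro i hi
    simp only [coe_filter, mem_range, Set.mem_ofPred_eq, coe_range, Set.mem_Iio] at hi ⊢
    have hdecomp := div_add_mod i p
    rw [lt_div_iff_mul_lt hp, mul_comm]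
    omega
  · intro k hk
    simp only [coe_range, Set.mem_Iio, coe_filter, mem_range, Set.mem_ofPred_eq] at hk ⊢
    rw [lt_div_iff_mul_lt hp, mul_comm] at hk
    exact ⟨by omega, by simp [mod_eq_of_lt hj]⟩
  · intro i hi
    simp only [coe_filter, mem_range, Set.mem_ofPred_eq] at hi ⊢
    have hdecomp := div_add_mod i p
    omega
  · intro k _
    simp [mul_add_div hp, div_eq_of_lt hj]

/-- Truncated subtraction is harmless in the ceiling `⌈(m - j) / p⌉ = (m - j + p - 1) / p`. -/
theorem sub_add_sub_one_div_eq {p j : ℕ} (m : ℕ) (hj : j < p) :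
    (m - j + p - 1) / p = (m + (p - 1 - j)) / p := by
  rcases le_or_gt j m with hjm | hmj
  · congr 1
    omega
  · rw [div_eq_of_lt (by omega), div_eq_of_lt (by omega)]

end Nat

theorem isLeast_add_of_ne_of_antitoneOn {α : Type*} [AddCommMonoid α] [PartialOrder α]
    [IsOrderedAddMonoid α] {f : ℕ → α} {p : ℕ} (hp : 1 < p) (hf : AntitoneOn f (Set.Iio p)) :
    IsLeast {v | ∃ i < p, ∃ j < p, i ≠ j ∧ v = f i + f j} (f (p - 1) + f (p - 2)) := by
  refine ⟨⟨p - 1, by omega, p - 2, by omega, by omega, rfl⟩, ?_⟩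
  rintro _ ⟨i, hi, j, hj, hij, rfl⟩
  have hle : ∀ a b, a < p → b < a → f (p - 1) + f (p - 2) ≤ f a + f b := fun a b ha hba =>
    add_le_add (hf ha (show p - 1 < p by omega) (by omega))
      (hf (show b < p by omega) (show p - 2 < p by omega) (by omega))
  rcases Nat.lt_or_gt_of_ne hij with hlt | hgt
  · exact (add_comm (f j) (f i)) ▸ hle j i hj hlt
  · exact hle i j hi hgt

theorem Ecard_eq {n p q j : ℕ} (hj : j < p) : Ecard n p q j = (n - q + (p - 1 - j)) / p :=
  Nat.card_filter_range_mod_eq (n - q) hj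

theorem Ecard_antitoneOn (n p q : ℕ) : AntitoneOn (Ecard n p q) (Set.Iio p) := by
  intro a ha b hb hab
  rw [Ecard_eq ha, Ecard_eq hb]
  exact Nat.div_le_div_right (by omega)

theorem Ecard_formula_general (p q n : ℕ) (hp : 1 < p) :
    (∀ j < p, Ecard n p q j = (n - j - q + p - 1) / p) ∧
    sInf {v : ℕ | ∃ i < p, ∃ j < p, i ≠ j ∧ v = Ecard n p q i + Ecard n p q j} =
      Ecard n p q (p - 1) + Ecard n p q (p - 2) ∧
    Ecard n p q (p - 1) + Ecard n p q (p - 2) = (n - q) / p + (n - q + 1) / p := by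
  refine ⟨fun j hj => ?_, (isLeast_add_of_ne_of_antitoneOn hp (Ecard_antitoneOn n p q)).csInf_eq,
    ?_⟩
  · rw [Ecard_eq hj, Nat.sub_right_comm n j q, Nat.sub_add_sub_one_div_eq _ hj]
  · rw [Ecard_eq (by omega), Ecard_eq (by omega), show p - 1 - (p - 1) = 0 by omega,
      show p - 1 - (p - 2) = 1 by omega, Nat.add_zero]

/-- For coprime `1 < p < q`: `|E_j| = ⌈(n−j−q)/p⌉` for `j < p`, and the minimum of
`|E_i| + |E_j|` over distinct `i, j < p` equals `|E_{p−1}| + |E_{p−2}|`, which equals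
`⌊(n−q)/p⌋ + ⌊(n−q+1)/p⌋`. -/
theorem Ecard_formula (p q n : ℕ) (hp : 1 < p) (hpq : p < q) (hcop : Nat.Coprime p q) :
    (∀ j < p, Ecard n p q j = (n - j - q + p - 1) / p) ∧
    sInf {v : ℕ | ∃ i < p, ∃ j < p, i ≠ j ∧ v = Ecard n p q i + Ecard n p q j} =
      Ecard n p q (p - 1) + Ecard n p q (p - 2) ∧
    Ecard n p q (p - 1) + Ecard n p q (p - 2) = (n - q) / p + (n - q + 1) / p :=
  Ecard_formula_general p q n hp
end

section
/- Let U be a vertex separator of the graph 𝐆 on {0,…,n−1} where i ~ j iff p | (j−i) or q | (j−i) (p,q > 1 coprime, n ≥ q). Then the vertices of 𝐆 can be 2-colored so that every edge of 𝐆∖U is monochromatic, every residue class modulo p is monochromatic, and 𝐆∖U is not monochromatic. -/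
/-- The `(n,p,q)`-graph: vertices `0,…,n-1`, with `i ~ j` iff `p ∣ (j-i)` or `q ∣ (j-i)`. -/
def npqGraph (n p q : ℕ) : SimpleGraph (Fin n) :=
  SimpleGraph.fromRel (fun i j => (p : ℤ) ∣ ((j : ℤ) - (i : ℤ)) ∨ (q : ℤ) ∣ ((j : ℤ) - (i : ℤ)))

/-- If `U` is a vertex separator of the `(n,p,q)`-graph `𝐆` (removing `U` disconnects the
graph), then the vertices can be 2-colored so that every edge of `𝐆 ∖ U` is
monochromatic, every residue class modulo `p` is monochromatic, and `𝐆 ∖ U` is not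
monochromatic. -/
theorem separator_coloring (p q n : ℕ) (hp : 1 < p) (hq : 1 < q) (hcop : Nat.Coprime p q)
    (hn : q ≤ n) (U : Finset (Fin n))
    (hU : ¬ ((npqGraph n p q).induce {v : Fin n | v ∉ U}).Preconnected) :
    ∃ c : Fin n → Bool,
      (∀ i j : Fin n, i ∉ U → j ∉ U → (npqGraph n p q).Adj i j → c i = c j) ∧
      (∀ i j : Fin n, (i : ℕ) % p = (j : ℕ) % p → c i = c j) ∧
      (∃ i j : Fin n, i ∉ U ∧ j ∉ U ∧ c i ≠ c j) := by
  classical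
  set S : Set (Fin n) := {v : Fin n | v ∉ U} with hS
  set G' := (npqGraph n p q).induce S with hG'
  rw [SimpleGraph.Preconnected] at hU
  push_neg at hU
  obtain ⟨a, b, hab⟩ := hU
  set c : Fin n → Bool := fun v =>
    decide (∃ w : S, G'.Reachable a w ∧ ((w : Fin n) : ℕ) % p = (v : ℕ) % p) with hc
  have key : ∀ (i : Fin n) (hi : i ∉ U), (c i = true ↔ G'.Reachable a ⟨i, hi⟩) := by
    intro i hi
    simp only [hc, decide_eq_true_eq]
    constructor
    · rintro ⟨w, hw, hmod⟩
      refine hw.trans ?_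
      by_cases hwi : (w : Fin n) = i
      · have : w = (⟨i, hi⟩ : S) := Subtype.ext hwi
        rw [this]
      · have hadj : G'.Adj w ⟨i, hi⟩ := by
          show (npqGraph n p q).Adj (w : Fin n) i
          rw [npqGraph, SimpleGraph.fromRel_adj]
          refine ⟨hwi, Or.inl (Or.inl ?_)⟩
          exact_mod_cast (Nat.modEq_iff_dvd (n := p)).mp hmod
        exact hadj.reachable
    · intro h
      exact ⟨⟨i, hi⟩, h, rfl⟩
  refine ⟨c, ?_, ?_, ?_⟩
  · intro i j hi hj hadj
    have hadj' : G'.Adj ⟨i, hi⟩ ⟨j, hj⟩ := hadj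
    rw [Bool.eq_iff_iff, key i hi, key j hj]
    exact ⟨fun h => h.trans hadj'.reachable, fun h => h.trans hadj'.symm.reachable⟩
  · intro i j hmod
    simp only [hc, hmod]
  · refine ⟨a, b, a.2, b.2, ?_⟩
    have ha : c a = true := (key a a.2).mpr (by exact SimpleGraph.Reachable.refl _)
    have hb : c b ≠ true := by
      intro h
      have h2 := (key b b.2).mp h
      rw [Subtype.coe_eta] at h2
      exact hab h2
    simp [ha, hb]
end

section
/- Let p/q be a positive rational in lowest terms with p, q > 0. A reduced fraction a/b < p/q satisfies b = ⌊aq/p⌋ + 1 and (aq mod p) > (iq mod p) for all 0 ≤ i < a if and only if a/b is a best left approximation of p/q, i.e., a/b = max{x ∈ F_k : x ≤ p/q} for some k, where F_k is the set of reduced nonnegative fractions c/d (including 1/0) with c + d ≤ k. -/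
lemma numden (m n : ℕ) (hn : 0 < n) (h : Nat.Coprime m n) :
    ((m:ℚ)/n).num = m ∧ ((m:ℚ)/n).den = n := by
  have h1 := Rat.num_div_eq_of_coprime (a := (m:ℤ)) (b := (n:ℤ)) (by exact_mod_cast hn) (by simpa using h)
  have h2 := Rat.den_div_eq_of_coprime (a := (m:ℤ)) (b := (n:ℤ)) (by exact_mod_cast hn) (by simpa using h)
  exact ⟨by simpa using h1, by simpa using h2⟩

lemma numden_le (c d : ℕ) (hd : 0 < d) :
    ((c:ℚ)/d).num + (((c:ℚ)/d).den : ℤ) ≤ (c:ℤ) + d := by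
  have hg0 : 0 < Nat.gcd c d := Nat.gcd_pos_of_pos_right _ hd
  have hcop : Nat.Coprime (c / Nat.gcd c d) (d / Nat.gcd c d) := Nat.coprime_div_gcd_div_gcd hg0
  have hd'0 : 0 < d / Nat.gcd c d := Nat.div_pos (Nat.le_of_dvd hd (Nat.gcd_dvd_right c d)) hg0
  have e1 : Nat.gcd c d * (c / Nat.gcd c d) = c := Nat.mul_div_cancel' (Nat.gcd_dvd_left c d)
  have e2 : Nat.gcd c d * (d / Nat.gcd c d) = d := Nat.mul_div_cancel' (Nat.gcd_dvd_right c d)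
  have hkey : c * (d / Nat.gcd c d) = (c / Nat.gcd c d) * d := by
    calc c * (d / Nat.gcd c d) = (Nat.gcd c d * (c / Nat.gcd c d)) * (d / Nat.gcd c d) := by rw [e1]
      _ = (c / Nat.gcd c d) * (Nat.gcd c d * (d / Nat.gcd c d)) := by ring
      _ = (c / Nat.gcd c d) * d := by rw [e2]
  have heq : (c:ℚ)/d = ((c / Nat.gcd c d : ℕ):ℚ)/((d / Nat.gcd c d : ℕ):ℚ) := by
    rw [div_eq_div_iff (by positivity) (Nat.cast_ne_zero.mpr hd'0.ne')]
    exact_mod_cast hkey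
  rw [heq]
  obtain ⟨h1, h2⟩ := numden _ _ hd'0 hcop
  rw [h1, h2]
  have hc2 : c / Nat.gcd c d ≤ c := Nat.div_le_self _ _
  have hd2 : d / Nat.gcd c d ≤ d := Nat.div_le_self _ _
  push_cast
  omega

lemma intCase1 (P Q A C RA RC PA PC B D : ℤ)
    (hP : 0 < P) (h1 : P * PA + RA = A * Q) (h2 : P * PC + RC = C * Q)
    (hB : B = PA + 1) (hD : PC + 1 ≤ D) (hRA : RA < P) (hRC : 0 ≤ RC)
    (hr : RC < RA) (hC0 : 0 ≤ C) (hCA : C < A) : C * B ≤ A * D := by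
  have key : P * (A * (PC + 1) - C * B) = (A - C) * (P - RA) + A * (RA - RC) := by
    rw [hB]; linear_combination A * h2 - C * h1
  have h3 : (0:ℤ) ≤ (A - C) * (P - RA) := mul_nonneg (by linarith) (by linarith)
  have h4 : (0:ℤ) ≤ A * (RA - RC) := mul_nonneg (by linarith) (by linarith)
  have h5 : 0 ≤ P * (A * (PC + 1) - C * B) := by linarith
  have h6 : 0 ≤ A * (PC + 1) - C * B := nonneg_of_mul_nonneg_right h5 hP
  have h7 : A * (PC + 1) ≤ A * D := mul_le_mul_of_nonneg_left hD (by linarith)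
  linarith

lemma intCase3 (P Q A C RA RC PA PC : ℤ)
    (hP : 0 < P) (hQ : 0 < Q) (h1 : P * PA + RA = A * Q) (h2 : P * PC + RC = C * Q)
    (hRA : 0 ≤ RA) (hRC : RC < P) (hCA : A < C)
    (hs : C + PC ≤ A + PA) : False := by
  have key : P * ((A + PA) - (C + PC)) = (A - C) * (P + Q) + RC - RA := by
    linear_combination h1 - h2
  have h3 : 0 ≤ P * ((A + PA) - (C + PC)) := mul_nonneg (by linarith) (by linarith)
  have h4 : (A - C) * (P + Q) ≤ (-1) * (P + Q) := by
    apply mul_le_mul_of_nonneg_right (by linarith) (by linarith)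
  linarith

lemma keyA (p q a b : ℕ) (hp : 0 < p) (hq : 0 < q)
    (hbdef : b = a * q / p + 1) (hrec : ∀ i < a, i * q % p < a * q % p)
    (c d : ℕ) (hcd : c * q < d * p) (hsum : c + d ≤ a + b) :
    c * b ≤ a * d := by
  have hAa := Nat.div_add_mod (a * q) p
  have hAc := Nat.div_add_mod (c * q) p
  have hra : a * q % p < p := Nat.mod_lt _ hp
  have hrc : c * q % p < p := Nat.mod_lt _ hp
  have hdge : c * q / p + 1 ≤ d := by
    have := (Nat.div_lt_iff_lt_mul hp).mpr hcd
    omega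
  have h1 : (p:ℤ) * ((a*q/p : ℕ) : ℤ) + ((a*q % p : ℕ) : ℤ) = (a:ℤ) * q := by exact_mod_cast hAa
  have h2 : (p:ℤ) * ((c*q/p : ℕ) : ℤ) + ((c*q % p : ℕ) : ℤ) = (c:ℤ) * q := by exact_mod_cast hAc
  rcases lt_trichotomy c a with hca | hca | hca
  · have hr := hrec c hca
    have := intCase1 (p:ℤ) q a c ((a*q%p : ℕ) : ℤ) ((c*q%p : ℕ) : ℤ)
      ((a*q/p : ℕ) : ℤ) ((c*q/p : ℕ) : ℤ) (b:ℤ) (d:ℤ)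
      (by exact_mod_cast hp) h1 h2 (by exact_mod_cast hbdef)
      (by exact_mod_cast hdge) (by exact_mod_cast hra) (by positivity)
      (by exact_mod_cast hr) (by positivity) (by exact_mod_cast hca)
    exact_mod_cast this
  · subst hca; rw [hbdef]; exact Nat.mul_le_mul_left _ (by omega)
  · exfalso
    have hs : (c:ℤ) + ((c*q/p : ℕ) : ℤ) ≤ (a:ℤ) + ((a*q/p : ℕ) : ℤ) := by
      have hsum' : (c:ℤ) + (d:ℤ) ≤ (a:ℤ) + (b:ℤ) := by exact_mod_cast hsum
      have hb' : (b:ℤ) = ((a*q/p : ℕ) : ℤ) + 1 := by exact_mod_cast hbdef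
      have hd' : ((c*q/p : ℕ) : ℤ) + 1 ≤ (d:ℤ) := by exact_mod_cast hdge
      linarith
    exact intCase3 (p:ℤ) q a c ((a*q%p : ℕ) : ℤ) ((c*q%p : ℕ) : ℤ)
      ((a*q/p : ℕ) : ℤ) ((c*q/p : ℕ) : ℤ)
      (by exact_mod_cast hp) (by exact_mod_cast hq) h1 h2
      (by positivity) (by exact_mod_cast hrc) (by exact_mod_cast hca) hs

lemma cross_le (c d a b : ℕ) (hd : 0 < d) (hb : 0 < b) :
    (c:ℚ)/d ≤ (a:ℚ)/b ↔ c * b ≤ a * d := by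
  rw [div_le_div_iff₀ (by exact_mod_cast hd) (by exact_mod_cast hb)]
  exact_mod_cast Iff.rfl

lemma cross_lt (c d a b : ℕ) (hd : 0 < d) (hb : 0 < b) :
    (c:ℚ)/d < (a:ℚ)/b ↔ c * b < a * d := by
  rw [div_lt_div_iff₀ (by exact_mod_cast hd) (by exact_mod_cast hb)]
  exact_mod_cast Iff.rfl

lemma floor_succ_mul (m p : ℕ) (hp : 0 < p) : m < p * (m / p + 1) := by
  have h1 := Nat.div_add_mod m p
  have h2 : m % p < p := Nat.mod_lt _ hp
  calc m = p * (m / p) + m % p := h1.symm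
    _ < p * (m / p) + p := by omega
    _ = p * (m / p + 1) := by ring


/-- Characterization of best left approximations.  Let `p/q` be a positive rational in
lowest terms and let `a/b < p/q` be a reduced fraction.  Then
`b = ⌊aq/p⌋ + 1` and `(aq mod p) > (iq mod p)` for all `0 ≤ i < a`
holds if and only if `a/b` is a best left approximation of `p/q`, i.e., `a/b` is the
greatest element of `{x ∈ F_k : x ≤ p/q}` for some `k`, where `F_k` is the set of
nonnegative reduced fractions `x` with (numerator + denominator) `≤ k`.
(Since `a/b < p/q < ∞`, the improper fraction `1/0 ∈ F_k` plays no role here.) -/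
theorem best_left_approx_iff (p q a b : ℕ) (hp : 0 < p) (hq : 0 < q)
    (hpq : Nat.Coprime p q) (hb : 0 < b) (hab : Nat.Coprime a b)
    (hlt : (a : ℚ) / b < (p : ℚ) / q) :
    (b = a * q / p + 1 ∧ ∀ i < a, i * q % p < a * q % p) ↔
      ∃ k : ℕ, IsGreatest
        {x : ℚ | 0 ≤ x ∧ x.num + (x.den : ℤ) ≤ (k : ℤ) ∧ x ≤ (p : ℚ) / q}
        ((a : ℚ) / b) := by
  obtain ⟨hnumab, hdenab⟩ := numden a b hb hab
  obtain ⟨hnumpq, hdenpq⟩ := numden p q hq hpq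
  constructor
  · rintro ⟨hbdef, hrec⟩
    -- a < p
    have hap : a < p := by
      by_contra h
      push_neg at h
      have hi : a - p < a := by omega
      have hmul : p * q ≤ a * q := Nat.mul_le_mul_right q h
      have heq : (a - p) * q % p = a * q % p := by
        have h2 : (a - p) * q + q * p = a * q := by
          rw [Nat.sub_mul, Nat.mul_comm q p]; omega
        calc (a - p) * q % p = ((a - p) * q + q * p) % p :=
              (Nat.add_mul_mod_self_right _ q p).symm
          _ = a * q % p := by rw [h2]
      have := hrec (a - p) hi
      omega
    have hbq : b ≤ q := by
      have h1 : a * q < q * p := by nlinarith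
      have := (Nat.div_lt_iff_lt_mul hp).mpr h1
      omega
    have habpq : a + b < p + q := by omega
    refine ⟨a + b, ⟨by positivity, ?_, le_of_lt hlt⟩, ?_⟩
    · rw [hnumab, hdenab]; push_cast; omega
    · rintro x ⟨hx0, hxk, hxle⟩
      set n := x.num.natAbs with hn
      have hxnum : (x.num : ℤ) = (n : ℤ) := (Int.natAbs_of_nonneg (Rat.num_nonneg.mpr hx0)).symm
      have hden : 0 < x.den := x.pos
      have hxeq : x = (n : ℚ) / (x.den : ℚ) := by
        have h := (Rat.num_div_den x).symm
        rw [hxnum] at h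
        push_cast at h
        exact h
      have hsum : n + x.den ≤ a + b := by
        rw [hxnum] at hxk
        exact_mod_cast hxk
      have hle' : n * q ≤ p * x.den := by
        rw [hxeq] at hxle
        exact (cross_le n x.den p q hden hq).mp hxle
      have hne : n * q ≠ p * x.den := by
        intro heq
        have hpn : p ∣ n := by
          apply Nat.Coprime.dvd_of_dvd_mul_right hpq
          exact ⟨x.den, heq⟩
        obtain ⟨t, ht⟩ := hpn
        have hdt : x.den = t * q := by
          have h3 : p * (t * q) = p * x.den := by rw [← heq, ht]; ring
          exact (Nat.eq_of_mul_eq_mul_left hp h3).symm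
        have htn : t ∣ n := ⟨p, by rw [ht]; ring⟩
        have htd : t ∣ x.den := ⟨q, hdt⟩
        have hred : Nat.Coprime n x.den := x.reduced
        have ht1 : t = 1 := Nat.eq_one_of_dvd_coprimes hred htn htd
        subst ht1
        simp only [Nat.mul_one, Nat.one_mul] at ht hdt
        omega
      have hcd : n * q < x.den * p := by
        rw [Nat.mul_comm x.den p]
        omega
      have hkey := keyA p q a b hp hq hbdef hrec n x.den hcd hsum
      rw [hxeq]
      exact (cross_le n x.den a b hden hb).mpr hkey
  · rintro ⟨k, ⟨hx0, hxk, hxle⟩, hub⟩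
    have hk1 : (a : ℤ) + b ≤ k := by rw [hnumab, hdenab] at hxk; exact_mod_cast hxk
    have hk1' : a + b ≤ k := by exact_mod_cast hk1
    have hkpq : k < p + q := by
      by_contra h
      push_neg at h
      have hmem : (p:ℚ)/q ∈ {x : ℚ | 0 ≤ x ∧ x.num + (x.den : ℤ) ≤ (k : ℤ) ∧ x ≤ (p : ℚ) / q} := by
        refine ⟨by positivity, ?_, le_refl _⟩
        rw [hnumpq, hdenpq]
        push_cast
        omega
      exact absurd (hub hmem) (not_le.mpr hlt)
    have habpq : a + b < p + q := by omega
    have hcross : a * q < b * p := by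
      rw [Nat.mul_comm b p]
      exact (cross_lt a b p q hb hq).mp hlt
    have hge : a * q / p + 1 ≤ b := by
      have h1 : a * q < b * p := hcross
      have := (Nat.div_lt_iff_lt_mul hp).mpr h1
      omega
    have hbdef : b = a * q / p + 1 := by
      rcases Nat.eq_zero_or_pos a with ha0 | ha0
      · have hb1 : b = 1 := (Nat.coprime_zero_left b).mp (ha0 ▸ hab)
        subst ha0; simp [hb1]
      · by_contra hne
        have hblt : a * q / p + 1 < b :=
          lt_of_le_of_ne hge (fun h => hne h.symm)
        have hd'0 : 0 < a * q / p + 1 := Nat.succ_pos _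
        have hd'lt : a * q < p * (a * q / p + 1) := floor_succ_mul (a * q) p hp
        have hmem' : ((a:ℚ)/((a * q / p + 1 : ℕ):ℚ)) ∈
            {x : ℚ | 0 ≤ x ∧ x.num + (x.den : ℤ) ≤ (k : ℤ) ∧ x ≤ (p : ℚ) / q} := by
          refine ⟨by positivity, ?_, ?_⟩
          · have h5 := numden_le a (a * q / p + 1) hd'0
            have h6 : (a:ℤ) + ((a * q / p + 1 : ℕ) : ℤ) ≤ (k : ℤ) := by
              have h7 : a + (a * q / p + 1) ≤ k := by omega
              exact_mod_cast h7
            omega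
          · exact (cross_le a _ p q hd'0 hq).mpr (le_of_lt hd'lt)
        have h8 := (cross_le a _ a b hd'0 hb).mp (hub hmem')
        have h9 : b ≤ a * q / p + 1 := Nat.le_of_mul_le_mul_left
          (by rw [Nat.mul_comm a b] at h8; rw [Nat.mul_comm]; exact h8) ha0
        omega
    have hap : a < p := by
      by_contra h
      push_neg at h
      have hqle : q ≤ a * q / p := by
        rw [Nat.le_div_iff_mul_le hp]
        calc q * p = p * q := Nat.mul_comm q p
          _ ≤ a * q := Nat.mul_le_mul_right q h
      omega
    refine ⟨hbdef, ?_⟩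
    intro i hi
    by_contra hri
    push_neg at hri
    -- strictness
    have hstrict : a * q % p < i * q % p := by
      rcases Nat.lt_or_ge (a * q % p) (i * q % p) with h | h
      · exact h
      · exfalso
        have heq : i * q % p = a * q % p := by omega
        have hmod : (p:ℤ) ∣ ((a:ℤ) * q - (i:ℤ) * q) := by
          have h1 : Nat.ModEq p (i * q) (a * q) := heq
          exact_mod_cast h1.dvd
        have hcop : IsCoprime (p:ℤ) (q:ℤ) := Nat.isCoprime_iff_coprime.mpr hpq
        have hdvd : (p:ℤ) ∣ ((a:ℤ) - i) := by
          apply hcop.dvd_of_dvd_mul_right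
          have h2 : ((a:ℤ) - i) * q = (a:ℤ) * q - (i:ℤ) * q := by ring
          rw [h2]; exact hmod
        have h3 : (0:ℤ) < (a:ℤ) - i := by
          have : (i:ℤ) < a := by exact_mod_cast hi
          omega
        have h4 := Int.le_of_dvd h3 hdvd
        have h5 : (a:ℤ) < p := by exact_mod_cast hap
        omega
    have hi1 : 1 ≤ i := by
      rcases Nat.eq_zero_or_pos i with h0 | h1
      · subst h0; simp at hstrict
      · exact h1
    set c := a - i with hcdef
    have hic : i + c = a := by omega
    have hc1 : 1 ≤ c := by omega
    have hca : c < a := by omega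
    have hAi := Nat.div_add_mod (i * q) p
    have hAc := Nat.div_add_mod (c * q) p
    have hAa := Nat.div_add_mod (a * q) p
    have hiq : i * q + c * q = a * q := by rw [← Nat.add_mul, hic]
    have hri' : i * q % p < p := Nat.mod_lt _ hp
    have hrc' : c * q % p < p := Nat.mod_lt _ hp
    have hra' : a * q % p < p := Nat.mod_lt _ hp
    -- residue sum
    have hrsum : i * q % p + c * q % p = a * q % p + p := by
      have hmodsum : (i * q % p + c * q % p) % p = a * q % p := by
        rw [← Nat.add_mod, hiq]
      have hS := Nat.div_add_mod (i * q % p + c * q % p) p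
      have hSlt : (i * q % p + c * q % p) / p ≤ 1 := by
        have h1 : (i * q % p + c * q % p) / p < 2 := by
          rw [Nat.div_lt_iff_lt_mul hp]; omega
        omega
      rcases Nat.le_one_iff_eq_zero_or_eq_one.mp hSlt with h01 | h01 <;>
        rw [h01] at hS <;> simp only [Nat.mul_zero, Nat.mul_one] at hS <;> omega
    -- denominator sum
    have hdsum : (i * q / p + 1) + (c * q / p + 1) = b := by
      have hAi' : (p:ℤ) * ((i*q/p : ℕ):ℤ) + ((i*q%p : ℕ):ℤ) = (i:ℤ) * q := by exact_mod_cast hAi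
      have hAc' : (p:ℤ) * ((c*q/p : ℕ):ℤ) + ((c*q%p : ℕ):ℤ) = (c:ℤ) * q := by exact_mod_cast hAc
      have hAa' : (p:ℤ) * ((a*q/p : ℕ):ℤ) + ((a*q%p : ℕ):ℤ) = (a:ℤ) * q := by exact_mod_cast hAa
      have hiq' : (i:ℤ) * q + (c:ℤ) * q = (a:ℤ) * q := by exact_mod_cast hiq
      have hrsum' : ((i*q%p : ℕ):ℤ) + ((c*q%p : ℕ):ℤ) = ((a*q%p : ℕ):ℤ) + p := by
        exact_mod_cast hrsum
      have hbd' : (b:ℤ) = ((a*q/p : ℕ):ℤ) + 1 := by exact_mod_cast hbdef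
      have hint : (p:ℤ) * (((i*q/p : ℕ):ℤ) + 1 + (((c*q/p : ℕ):ℤ) + 1)) = (p:ℤ) * b := by
        rw [hbd']
        linear_combination hAi' + hAc' - hAa' + hiq' - hrsum'
      have hnat : p * ((i * q / p + 1) + (c * q / p + 1)) = p * b := by exact_mod_cast hint
      exact Nat.eq_of_mul_eq_mul_left hp hnat
    -- memberships
    have hdi0 : 0 < i * q / p + 1 := Nat.succ_pos _
    have hdc0 : 0 < c * q / p + 1 := Nat.succ_pos _
    have hilt : i * q < p * (i * q / p + 1) := floor_succ_mul (i * q) p hp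
    have hclt : c * q < p * (c * q / p + 1) := floor_succ_mul (c * q) p hp
    have hdib : i * q / p + 1 ≤ b := by omega
    have hdcb : c * q / p + 1 ≤ b := by omega
    have hmemi : ((i:ℚ)/((i * q / p + 1 : ℕ):ℚ)) ∈
        {x : ℚ | 0 ≤ x ∧ x.num + (x.den : ℤ) ≤ (k : ℤ) ∧ x ≤ (p : ℚ) / q} := by
      refine ⟨by positivity, ?_, (cross_le i _ p q hdi0 hq).mpr (le_of_lt hilt)⟩
      have h5 := numden_le i (i * q / p + 1) hdi0
      have h6 : (i:ℤ) + ((i * q / p + 1 : ℕ) : ℤ) ≤ (k : ℤ) := by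
        have h7 : i + (i * q / p + 1) ≤ k := by omega
        exact_mod_cast h7
      omega
    have hmemc : ((c:ℚ)/((c * q / p + 1 : ℕ):ℚ)) ∈
        {x : ℚ | 0 ≤ x ∧ x.num + (x.den : ℤ) ≤ (k : ℤ) ∧ x ≤ (p : ℚ) / q} := by
      refine ⟨by positivity, ?_, (cross_le c _ p q hdc0 hq).mpr (le_of_lt hclt)⟩
      have h5 := numden_le c (c * q / p + 1) hdc0
      have h6 : (c:ℤ) + ((c * q / p + 1 : ℕ) : ℤ) ≤ (k : ℤ) := by
        have h7 : c + (c * q / p + 1) ≤ k := by omega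
        exact_mod_cast h7
      omega
    have hub1 : i * b ≤ a * (i * q / p + 1) :=
      (cross_le i _ a b hdi0 hb).mp (hub hmemi)
    have hub2 : c * b ≤ a * (c * q / p + 1) :=
      (cross_le c _ a b hdc0 hb).mp (hub hmemc)
    have hsum2 : i * b + c * b = a * (i * q / p + 1) + a * (c * q / p + 1) := by
      calc i * b + c * b = (i + c) * b := by ring
        _ = a * b := by rw [hic]
        _ = a * ((i * q / p + 1) + (c * q / p + 1)) := by rw [hdsum]
        _ = a * (i * q / p + 1) + a * (c * q / p + 1) := by ring
    have heq1 : i * b = a * (i * q / p + 1) := by omega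
    have hadvd : a ∣ i := by
      apply Nat.Coprime.dvd_of_dvd_mul_right hab
      exact ⟨i * q / p + 1, heq1⟩
    have := Nat.le_of_dvd hi1 hadvd
    omega
end

section
/- Let p, q be coprime with 1 < p < q, let h < p+q−3, and let a/b = Left_{h+3}(p/q) and c/d = Right_{h+3}(p/q) be the best left and right approximations of p/q among reduced fractions x/y with x+y ≤ h+3. Then G(aq, p, q) = a + b − 1 and G(dp, p, q) = c + d − 1, where G(n,p,q) = ⌊n/p⌋ + ⌊n/q⌋ − 2⌊n/(pq)⌋. -/
set_option maxHeartbeats 2000000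


/-- num/den of a reduced natural fraction. -/
lemma num_den_nat (m n : ℕ) (hn : 0 < n) (h : Nat.Coprime m n) :
    ((m : ℚ) / n).num = m ∧ (((m : ℚ) / n).den : ℤ) = n := by
  have hb0 : (0 : ℤ) < (n : ℤ) := by exact_mod_cast hn
  have hc : Nat.Coprime (m : ℤ).natAbs (n : ℤ).natAbs := by simpa using h
  have e : ((m : ℚ) / n) = ((m : ℤ) : ℚ) / ((n : ℤ) : ℚ) := by push_cast; ring
  constructor
  · rw [e]; exact Rat.num_div_eq_of_coprime hb0 hc
  · rw [e]; exact Rat.den_div_eq_of_coprime hb0 hc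

/-- Bound on num + den of a not-necessarily-reduced natural fraction. -/
lemma num_add_den_le (m n : ℕ) (hn : 0 < n) :
    ((m : ℚ) / n).num + (((m : ℚ) / n).den : ℤ) ≤ (m : ℤ) + n := by
  have hn' : ((n : ℤ)) ≠ 0 := Int.natCast_ne_zero.mpr hn.ne'
  have e : ((m : ℚ) / n) = Rat.divInt (m : ℤ) (n : ℤ) := by
    rw [Rat.divInt_eq_div]; push_cast; ring
  have hden : (((m : ℚ) / n).den : ℤ) ≤ n := by
    rw [e]; exact Int.le_of_dvd (by exact_mod_cast hn) (Rat.den_dvd _ _)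
  have hnum : ((m : ℚ) / n).num ≤ m := by
    rcases Nat.eq_zero_or_pos m with hm | hm
    · subst hm; simp
    · rw [e]; exact Int.le_of_dvd (by exact_mod_cast hm) (Rat.num_dvd _ hn')
  linarith

/-- For coprime `1 < p < q` and `h < p+q−3`, if `a/b = Left_{h+3}(p/q)` and
`c/d = Right_{h+3}(p/q)` are the best left and right approximations of `p/q` among
reduced fractions `x/y` with `x + y ≤ h + 3`, then `G(aq,p,q) = a + b − 1` and
`G(dp,p,q) = c + d − 1`. -/
theorem G_of_best_approx (p q h a b c d : ℕ) (hp : 1 < p) (hpq : p < q)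
    (hcop : Nat.Coprime p q) (hh : h < p + q - 3)
    (hb : 0 < b) (hab : Nat.Coprime a b) (hd : 0 < d) (hcd : Nat.Coprime c d)
    (hleft : IsGreatest
      {x : ℚ | 0 ≤ x ∧ x.num + (x.den : ℤ) ≤ ((h : ℤ) + 3) ∧ x ≤ (p : ℚ) / q}
      ((a : ℚ) / b))
    (hright : IsLeast
      {x : ℚ | 0 ≤ x ∧ x.num + (x.den : ℤ) ≤ ((h : ℤ) + 3) ∧ (p : ℚ) / q ≤ x}
      ((c : ℚ) / d)) :
    Gfun (a * q) p q = a + b - 1 ∧ Gfun (d * p) p q = c + d - 1 := by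
  have hq : 0 < q := by omega
  have hp0 : 0 < p := by omega
  have hqQ : (0 : ℚ) < q := by exact_mod_cast hq
  have hpQ : (0 : ℚ) < p := by exact_mod_cast hp0
  have hbQ : (0 : ℚ) < b := by exact_mod_cast hb
  have hdQ : (0 : ℚ) < d := by exact_mod_cast hd
  have hsum_lt : h + 3 < p + q := by omega
  obtain ⟨⟨_, habsum, hable⟩, hmax⟩ := hleft
  obtain ⟨⟨_, hcdsum, hcdge⟩, hmin⟩ := hright
  obtain ⟨hanum, haden⟩ := num_den_nat a b hb hab
  obtain ⟨hcnum, hcden⟩ := num_den_nat c d hd hcd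
  rw [hanum, haden] at habsum
  rw [hcnum, hcden] at hcdsum
  have habN : a + b ≤ h + 3 := by exact_mod_cast habsum
  have hcdN : c + d ≤ h + 3 := by exact_mod_cast hcdsum
  -- the fractions are distinct from p/q
  have hne : ∀ x y : ℕ, 0 < y → Nat.Coprime x y → x + y ≤ h + 3 →
      (x : ℚ) / y ≠ (p : ℚ) / q := by
    intro x y hy hxy hle heq
    have := Rat.div_int_inj (a := (x : ℤ)) (b := (y : ℤ)) (c := (p : ℤ)) (d := (q : ℤ))
      (by exact_mod_cast hy) (by exact_mod_cast hq) (by simpa using hxy)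
      (by simpa using hcop) (by push_cast at heq ⊢; exact heq)
    have hx : x = p := by exact_mod_cast this.1
    have hyq : y = q := by exact_mod_cast this.2
    omega
  -- strict inequalities
  have hablt : (a : ℚ) / b < (p : ℚ) / q :=
    lt_of_le_of_ne hable (hne a b hb hab habN)
  have hcdlt : (p : ℚ) / q < (c : ℚ) / d :=
    lt_of_le_of_ne hcdge fun heq => hne c d hd hcd hcdN heq.symm
  have haqbp : a * q < b * p := by
    have := (div_lt_div_iff₀ hbQ hqQ).mp hablt
    have h2 : (a : ℚ) * q < (b : ℚ) * p := by linarith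
    exact_mod_cast h2
  have hdpcq : d * p < c * q := by
    have := (div_lt_div_iff₀ hqQ hdQ).mp hcdlt
    have h2 : (d : ℚ) * p < (c : ℚ) * q := by linarith
    exact_mod_cast h2
  -- a < p and d < q
  have hap : a < p := by nlinarith
  have hdq : d < q := by nlinarith
  constructor
  · -- left part
    rcases Nat.eq_zero_or_pos a with ha0 | ha
    · subst ha0
      have hb1 : b = 1 := Nat.coprime_zero_left b |>.mp hab
      simp [Gfun, hb1]
    · -- key: (b-1)*p < a*q
      have hb2 : 2 ≤ b := by
        by_contra hb2
        have : b = 1 := by omega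
        subst this
        -- a*q < p, but a ≥ 1 so q ≤ a*q < p, contradiction
        have : q ≤ a * q := Nat.le_mul_of_pos_left q ha
        omega
      have hkey : (b - 1) * p < a * q := by
        by_contra hk
        push_neg at hk
        have hb1 : 0 < b - 1 := by omega
        set x : ℚ := (a : ℚ) / ((b - 1 : ℕ) : ℚ) with hx
        have hbQ1 : (0 : ℚ) < ((b - 1 : ℕ) : ℚ) := by exact_mod_cast hb1
        have hxmem : x ∈ {x : ℚ | 0 ≤ x ∧ x.num + (x.den : ℤ) ≤ ((h : ℤ) + 3) ∧
            x ≤ (p : ℚ) / q} := by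
          refine ⟨by positivity, ?_, ?_⟩
          · have := num_add_den_le a (b - 1) hb1
            have hle2 : (a : ℤ) + (b - 1 : ℕ) ≤ (h : ℤ) + 3 := by
              have : a + (b - 1) ≤ h + 3 := by omega
              exact_mod_cast this
            exact le_trans this hle2
          · rw [div_le_div_iff₀ hbQ1 hqQ]
            have : (a : ℚ) * q ≤ ((b - 1 : ℕ) : ℚ) * p := by exact_mod_cast hk
            linarith
        have hle3 := hmax hxmem
        have hgt : (a : ℚ) / b < x := by
          rw [hx, div_lt_div_iff₀ hbQ hbQ1]
          have hba : ((b - 1 : ℕ) : ℚ) < (b : ℚ) := by exact_mod_cast Nat.sub_lt hb one_pos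
          have haQ : (0 : ℚ) < a := by exact_mod_cast ha
          nlinarith
        linarith
      have h1 : a * q / p = b - 1 := by
        apply Nat.div_eq_of_lt_le (le_of_lt hkey)
        have : b - 1 + 1 = b := by omega
        rw [this]
        exact haqbp
      have h2 : a * q / q = a := Nat.mul_div_cancel a hq
      have h3 : a * q / (p * q) = 0 := by
        rw [Nat.mul_div_mul_right a p hq]
        exact Nat.div_eq_of_lt hap
      simp only [Gfun, h1, h2, h3]
      omega
  · -- right part
    have hc : 0 < c := by
      rcases Nat.eq_zero_or_pos c with hc0 | hc
      · exfalso; subst hc0; simp at hdpcq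
      · exact hc
    have hkey : (c - 1) * q < d * p := by
      by_contra hk
      push_neg at hk
      have hc2 : 2 ≤ c := by
        by_contra hc2
        have : c = 1 := by omega
        subst this
        simp at hk
        omega
      have hc1 : 0 < c - 1 := by omega
      set x : ℚ := ((c - 1 : ℕ) : ℚ) / (d : ℚ) with hx
      have hxmem : x ∈ {x : ℚ | 0 ≤ x ∧ x.num + (x.den : ℤ) ≤ ((h : ℤ) + 3) ∧
          (p : ℚ) / q ≤ x} := by
        refine ⟨by positivity, ?_, ?_⟩
        · have := num_add_den_le (c - 1) d hd
          have hle2 : ((c - 1 : ℕ) : ℤ) + (d : ℤ) ≤ (h : ℤ) + 3 := by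
            have : (c - 1) + d ≤ h + 3 := by omega
            exact_mod_cast this
          exact le_trans this hle2
        · rw [div_le_div_iff₀ hqQ hdQ]
          have : (d : ℚ) * p ≤ ((c - 1 : ℕ) : ℚ) * q := by exact_mod_cast hk
          linarith
      have hle3 := hmin hxmem
      have hlt2 : x < (c : ℚ) / d := by
        rw [hx, div_lt_div_iff₀ hdQ hdQ]
        have : ((c - 1 : ℕ) : ℚ) < (c : ℚ) := by exact_mod_cast Nat.sub_lt hc one_pos
        nlinarith
      linarith
    have h1 : d * p / q = c - 1 := by
      apply Nat.div_eq_of_lt_le (le_of_lt hkey)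
      have : c - 1 + 1 = c := by omega
      rw [this]
      exact hdpcq
    have h2 : d * p / p = d := Nat.mul_div_cancel d hp0
    have h3 : d * p / (p * q) = 0 := by
      rw [mul_comm p q, Nat.mul_div_mul_right d q hp0]
      exact Nat.div_eq_of_lt hdq
    simp only [Gfun, h1, h2, h3]
    omega
end
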